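/- arXiv:1803.10629 — 13 statements merged into one kernel-verified Lean document; each statement's English description precedes it below -/
import Mathlib

section
/- Semi-discrete gradient-flow energy dissipation, Fokker-Planck case: suppose u_1,...,u_I : J → ℝ solve, on the open interval J, the semi-discrete scheme u_i'(t) + (1/Δx)(F_{i+1/2}(t) − F_{i−1/2}(t)) = 0 for i = 1,...,I, where F_{1/2} = F_{I+1/2} = 0 and, for 1 ≤ i ≤ I−1, F_{i+1/2}(t) = −(φ_{i+1/2}(t)/Δx)[(g(u_{i+1}(t)) − v_{i+1}) − (g(u_i(t)) − v_i)] with nonnegative functions φ_{i+1/2} : J → ℝ and fixed reals v_1,...,v_I. Then for every t ∈ J, (d/dt)[ Δx Σ_{i=1}^I ( G(u_i(t)) − u_i(t) v_i ) ] = −Δx Σ_{i=1}^{I−1} φ_{i+1/2}(t) [ ((g(u_{i+1}(t)) − v_{i+1}) − (g(u_i(t)) − v_i))/Δx ]², which is ≤ 0. -/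
/-! By the chain rule the energy has derivative `Δx ∑ᵢ wᵢ u_i'` with `wᵢ = g(uᵢ) - vᵢ`, the
discrete chemical potential. Summation by parts, with the zero boundary fluxes, moves the
discrete divergence of the flux onto `w`, and the flux is `-(φ/Δx)` times the discrete
gradient of `w`, so the derivative is minus a `φ`-weighted sum of squares. -/

open Finset

section SummationByParts

variable {R : Type*} [CommRing R]

theorem sum_Icc_mul_sub_pred (w F : ℕ → R) (m : ℕ) :
    ∑ i ∈ Icc 1 (m + 1), w i * (F i - F (i - 1))
      = w (m + 1) * F (m + 1) - w 1 * F 0 - ∑ i ∈ Icc 1 m, (w (i + 1) - w i) * F i := by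
  induction m with
  | zero => simp [mul_sub]
  | succ m ih =>
    rw [sum_Icc_succ_top (by omega), ih, sum_Icc_succ_top (by omega), Nat.add_sub_cancel]
    ring

theorem sum_Icc_mul_sub_pred_of_zero_flux (w F : ℕ → R) (n : ℕ) (h0 : F 0 = 0) (hn : F n = 0) :
    ∑ i ∈ Icc 1 n, w i * (F i - F (i - 1)) = -∑ i ∈ Icc 1 (n - 1), (w (i + 1) - w i) * F i := by
  cases n with
  | zero => simp
  | succ m => rw [sum_Icc_mul_sub_pred, h0, hn, Nat.add_sub_cancel]; ring

end SummationByParts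

theorem mul_sum_mul_flux_div_eq_neg_dirichlet {K : Type*} [Field K] (Δx : K) (w φ F : ℕ → K)
    (n : ℕ) (h0 : F 0 = 0) (hn : F n = 0)
    (hF : ∀ i ∈ Icc 1 (n - 1), F i = -(φ i / Δx) * (w (i + 1) - w i)) :
    Δx * ∑ i ∈ Icc 1 n, w i * (-(1 / Δx) * (F i - F (i - 1)))
      = -Δx * ∑ i ∈ Icc 1 (n - 1), φ i * ((w (i + 1) - w i) / Δx) ^ 2 := by
  rcases eq_or_ne Δx 0 with rfl | hΔx
  · simp
  have hdiv : ∑ i ∈ Icc 1 n, w i * (-(1 / Δx) * (F i - F (i - 1)))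
      = -(1 / Δx) * ∑ i ∈ Icc 1 n, w i * (F i - F (i - 1)) := by
    rw [mul_sum]; exact sum_congr rfl fun i _ => by ring
  have hflux : ∑ i ∈ Icc 1 (n - 1), (w (i + 1) - w i) * F i
      = -Δx * ∑ i ∈ Icc 1 (n - 1), φ i * ((w (i + 1) - w i) / Δx) ^ 2 := by
    rw [mul_sum]
    refine sum_congr rfl fun i hi => ?_
    rw [hF i hi]
    field_simp
  rw [hdiv, sum_Icc_mul_sub_pred_of_zero_flux w F n h0 hn, hflux]
  field_simp

theorem hasDerivAt_sum_sub_mul_of_hasDerivAt {G g : ℝ → ℝ} (hG : ∀ x, HasDerivAt G (g x) x)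
    {u : ℕ → ℝ → ℝ} {u' : ℕ → ℝ} (v : ℕ → ℝ) (s : Finset ℕ) {t : ℝ}
    (hu : ∀ i ∈ s, HasDerivAt (u i) (u' i) t) :
    HasDerivAt (fun τ => ∑ i ∈ s, (G (u i τ) - u i τ * v i))
      (∑ i ∈ s, (g (u i t) - v i) * u' i) t :=
  HasDerivAt.fun_sum fun i hi =>
    (((hG (u i t)).comp t (hu i hi)).sub ((hu i hi).mul_const (v i))).congr_deriv (by ring)

theorem semidiscrete_gradient_flow_energy_dissipation_FP_general
    (I : ℕ) (Δx : ℝ) (hΔx : Δx = 1 / (I : ℝ))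
    (J : Set ℝ)
    (g G : ℝ → ℝ) (hG : ∀ x : ℝ, HasDerivAt G (g x) x)
    (u : ℕ → ℝ → ℝ) (φ : ℕ → ℝ → ℝ) (v : ℕ → ℝ)
    (hφ : ∀ i, ∀ t ∈ J, 0 ≤ φ i t)
    (F : ℕ → ℝ → ℝ)
    (hF0 : ∀ t, F 0 t = 0) (hFI : ∀ t, F I t = 0)
    (hF : ∀ i ∈ Finset.Icc 1 (I - 1), ∀ t ∈ J,
      F i t = -(φ i t / Δx) * ((g (u (i + 1) t) - v (i + 1)) - (g (u i t) - v i)))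
    (hode : ∀ i ∈ Finset.Icc 1 I, ∀ t ∈ J,
      HasDerivAt (u i) (-(1 / Δx) * (F i t - F (i - 1) t)) t) :
    ∀ t ∈ J,
      HasDerivAt
        (fun s => Δx * ∑ i ∈ Finset.Icc 1 I, (G (u i s) - u i s * v i))
        (-Δx * ∑ i ∈ Finset.Icc 1 (I - 1),
          φ i t * (((g (u (i + 1) t) - v (i + 1)) - (g (u i t) - v i)) / Δx) ^ 2) t
      ∧ -Δx * ∑ i ∈ Finset.Icc 1 (I - 1),
          φ i t * (((g (u (i + 1) t) - v (i + 1)) - (g (u i t) - v i)) / Δx) ^ 2 ≤ 0 := by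
  intro t ht
  have hderiv := (hasDerivAt_sum_sub_mul_of_hasDerivAt hG v (Icc 1 I)
    fun i hi => hode i hi t ht).const_mul Δx
  rw [mul_sum_mul_flux_div_eq_neg_dirichlet Δx (fun i => g (u i t) - v i) (fun i => φ i t)
    (fun i => F i t) I (hF0 t) (hFI t) fun i hi => hF i hi t ht] at hderiv
  refine ⟨hderiv, ?_⟩
  have hΔx_nonneg : 0 ≤ Δx := hΔx ▸ by positivity
  have hsum_nonneg := sum_nonneg fun i (_ : i ∈ Icc 1 (I - 1)) =>
    mul_nonneg (hφ i t ht) (sq_nonneg (((g (u (i + 1) t) - v (i + 1)) - (g (u i t) - v i)) / Δx))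
  rw [neg_mul]
  exact neg_nonpos.mpr (mul_nonneg hΔx_nonneg hsum_nonneg)

/-- semi-discrete gradient-flow energy dissipation, Fokker-Planck case. -/
theorem semidiscrete_gradient_flow_energy_dissipation_FP
    (I : ℕ) (hI : 1 ≤ I) (Δx : ℝ) (hΔx : Δx = 1 / (I : ℝ))
    (J : Set ℝ) (hJopen : IsOpen J) (hJconn : J.OrdConnected)
    (g G : ℝ → ℝ) (hG : ∀ x : ℝ, HasDerivAt G (g x) x)
    (u : ℕ → ℝ → ℝ) (φ : ℕ → ℝ → ℝ) (v : ℕ → ℝ)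
    (hφ : ∀ i, ∀ t ∈ J, 0 ≤ φ i t)
    (F : ℕ → ℝ → ℝ)
    (hF0 : ∀ t, F 0 t = 0) (hFI : ∀ t, F I t = 0)
    (hF : ∀ i ∈ Finset.Icc 1 (I - 1), ∀ t ∈ J,
      F i t = -(φ i t / Δx) * ((g (u (i + 1) t) - v (i + 1)) - (g (u i t) - v i)))
    (hode : ∀ i ∈ Finset.Icc 1 I, ∀ t ∈ J,
      HasDerivAt (u i) (-(1 / Δx) * (F i t - F (i - 1) t)) t) :
    ∀ t ∈ J,
      HasDerivAt
        (fun s => Δx * ∑ i ∈ Finset.Icc 1 I, (G (u i s) - u i s * v i))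
        (-Δx * ∑ i ∈ Finset.Icc 1 (I - 1),
          φ i t * (((g (u (i + 1) t) - v (i + 1)) - (g (u i t) - v i)) / Δx) ^ 2) t
      ∧ -Δx * ∑ i ∈ Finset.Icc 1 (I - 1),
          φ i t * (((g (u (i + 1) t) - v (i + 1)) - (g (u i t) - v i)) / Δx) ^ 2 ≤ 0 :=
  semidiscrete_gradient_flow_energy_dissipation_FP_general I Δx hΔx J g G hG u φ v hφ F hF0 hFI hF
    hode
end

section
/- Semi-discrete gradient-flow energy dissipation, generalized Keller-Segel case: let K ∈ ℝ^{I×I} be symmetric, suppose u_1,...,u_I : J → ℝ are differentiable on the open interval J, set v_i(t) = Σ_{j=1}^I K_{ij} u_j(t), and suppose u solves u_i'(t) + (1/Δx)(F_{i+1/2}(t) − F_{i−1/2}(t)) = 0 for i = 1,...,I, where F_{1/2} = F_{I+1/2} = 0 and, for 1 ≤ i ≤ I−1, F_{i+1/2}(t) = −(φ_{i+1/2}(t)/Δx)[(g(u_{i+1}(t)) − v_{i+1}(t)) − (g(u_i(t)) − v_i(t))] with nonnegative functions φ_{i+1/2}. Then for every t ∈ J, (d/dt)[ Δx Σ_{i=1}^I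 ( G(u_i(t)) − (1/2) u_i(t) v_i(t) ) ] = −Δx Σ_{i=1}^{I−1} φ_{i+1/2}(t) [ ((g(u_{i+1}(t)) − v_{i+1}(t)) − (g(u_i(t)) − v_i(t)))/Δx ]², which is ≤ 0. -/
/-!
Along the flow the energy changes at the rate `Δx ∑ μᵢ uᵢ'`, where `μᵢ = g(uᵢ) - vᵢ` is the
discrete chemical potential; the symmetry of `K` is what makes the derivative of the quadratic
interaction term `½ ∑ uᵢ vᵢ` equal to `∑ uᵢ' vᵢ`. Inserting the conservative scheme and summing
by parts with the zero boundary fluxes turns `∑ μᵢ uᵢ'` into `(1/Δx) ∑ (μᵢ₊₁ - μᵢ) Fᵢ₊₁/₂`, and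
the flux is `-φ/Δx` times that very difference, so each term is a nonpositive square.
-/

open Finset

namespace Finset

variable {R : Type*} [CommRing R]

theorem sum_Icc_mul_sub_add_sum_Icc_sub_mul (w F : ℕ → R) (n : ℕ) :
    ∑ i ∈ Icc 1 n, w i * (F i - F (i - 1)) + ∑ i ∈ Icc 1 n, (w (i + 1) - w i) * F i
      = w (n + 1) * F n - w 1 * F 0 := by
  induction n with
  | zero => simp
  | succ n ih =>
    rw [sum_Icc_succ_top (by omega), sum_Icc_succ_top (by omega), Nat.add_sub_cancel]
    linear_combination ih

theorem sum_Icc_mul_sub_of_boundary_eq_zero {w F : ℕ → R} {n : ℕ} (h₀ : F 0 = 0)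
    (hn : F n = 0) :
    ∑ i ∈ Icc 1 n, w i * (F i - F (i - 1))
      = -∑ i ∈ Icc 1 (n - 1), (w (i + 1) - w i) * F i := by
  have parts := sum_Icc_mul_sub_add_sum_Icc_sub_mul w F n
  rcases n with _ | m
  · simp
  · rw [sum_Icc_succ_top (by omega) (fun i => (w (i + 1) - w i) * F i), hn, h₀] at parts
    rw [Nat.add_sub_cancel]
    linear_combination parts

theorem sum_mul_sum_mul_comm_of_symm {ι : Type*} (s : Finset ι) {K : ι → ι → R}
    (hK : ∀ i j, K i j = K j i) (a b : ι → R) :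
    ∑ i ∈ s, a i * ∑ j ∈ s, K i j * b j = ∑ i ∈ s, b i * ∑ j ∈ s, K i j * a j := by
  simp_rw [mul_sum]
  rw [sum_comm]
  refine sum_congr rfl fun i _ => sum_congr rfl fun j _ => ?_
  rw [hK j i]
  ring

end Finset

theorem hasDerivAt_sum_sub_half_mul_conv {ι : Type*} (s : Finset ι) {g G : ℝ → ℝ}
    (hG : ∀ x, HasDerivAt G (g x) x) {K : ι → ι → ℝ} (hK : ∀ i j, K i j = K j i)
    {u v : ι → ℝ → ℝ} (hv : ∀ i τ, v i τ = ∑ j ∈ s, K i j * u j τ) {u' : ι → ℝ} {t : ℝ}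
    (hu : ∀ i ∈ s, HasDerivAt (u i) (u' i) t) :
    HasDerivAt (fun τ => ∑ i ∈ s, (G (u i τ) - 1 / 2 * u i τ * v i τ))
      (∑ i ∈ s, (g (u i t) - v i t) * u' i) t := by
  have hv' : ∀ i, HasDerivAt (v i) (∑ j ∈ s, K i j * u' j) t := fun i => by
    rw [show v i = fun τ => ∑ j ∈ s, K i j * u j τ from funext (hv i)]
    exact HasDerivAt.fun_sum fun j hj => (hu j hj).const_mul (K i j)
  have hterms := HasDerivAt.fun_sum fun i hi =>
    ((hG (u i t)).comp t (hu i hi)).sub (((hu i hi).const_mul (1 / 2)).mul (hv' i))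
  refine hterms.congr_deriv ?_
  have interaction : ∑ i ∈ s, u i t * ∑ j ∈ s, K i j * u' j = ∑ i ∈ s, u' i * v i t := by
    simp only [hv]
    exact sum_mul_sum_mul_comm_of_symm s hK _ _
  have split : ∀ i ∈ s,
      g (u i t) * u' i - (1 / 2 * u' i * v i t + 1 / 2 * u i t * ∑ j ∈ s, K i j * u' j)
      = ((g (u i t) - v i t) * u' i + 1 / 2 * (u' i * v i t))
        - 1 / 2 * (u i t * ∑ j ∈ s, K i j * u' j) := fun i _ => by ring
  rw [sum_congr rfl split, sum_sub_distrib, sum_add_distrib, ← mul_sum, ← mul_sum, interaction]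
  ring

theorem semidiscrete_gradient_flow_energy_dissipation_GKS_general
    (I : ℕ) (hI : 1 ≤ I) (Δx : ℝ) (hΔx : Δx = 1 / (I : ℝ))
    (J : Set ℝ)
    (g G : ℝ → ℝ) (hG : ∀ x : ℝ, HasDerivAt G (g x) x)
    (K : ℕ → ℕ → ℝ) (hK : ∀ i j, K i j = K j i)
    (u : ℕ → ℝ → ℝ) (φ : ℕ → ℝ → ℝ)
    (v : ℕ → ℝ → ℝ)
    (hv : ∀ i, ∀ t : ℝ, v i t = ∑ j ∈ Finset.Icc 1 I, K i j * u j t)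
    (hφ : ∀ i, ∀ t ∈ J, 0 ≤ φ i t)
    (F : ℕ → ℝ → ℝ)
    (hF0 : ∀ t, F 0 t = 0) (hFI : ∀ t, F I t = 0)
    (hF : ∀ i ∈ Finset.Icc 1 (I - 1), ∀ t ∈ J,
      F i t = -(φ i t / Δx) * ((g (u (i + 1) t) - v (i + 1) t) - (g (u i t) - v i t)))
    (hode : ∀ i ∈ Finset.Icc 1 I, ∀ t ∈ J,
      HasDerivAt (u i) (-(1 / Δx) * (F i t - F (i - 1) t)) t) :
    ∀ t ∈ J,
      HasDerivAt
        (fun s => Δx * ∑ i ∈ Finset.Icc 1 I, (G (u i s) - (1 / 2) * u i s * v i s))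
        (-Δx * ∑ i ∈ Finset.Icc 1 (I - 1),
          φ i t * (((g (u (i + 1) t) - v (i + 1) t) - (g (u i t) - v i t)) / Δx) ^ 2) t
      ∧ -Δx * ∑ i ∈ Finset.Icc 1 (I - 1),
          φ i t * (((g (u (i + 1) t) - v (i + 1) t) - (g (u i t) - v i t)) / Δx) ^ 2 ≤ 0 := by
  intro t ht
  have hΔx_pos : 0 < Δx := by rw [hΔx]; exact one_div_pos.mpr (by exact_mod_cast hI)
  set μ : ℕ → ℝ := fun i => g (u i t) - v i t
  have energy := (hasDerivAt_sum_sub_half_mul_conv (Icc 1 I) hG hK hv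
    (fun i hi => hode i hi t ht)).const_mul Δx
  have dissipation : Δx * ∑ i ∈ Icc 1 I, μ i * (-(1 / Δx) * (F i t - F (i - 1) t))
      = -Δx * ∑ i ∈ Icc 1 (I - 1), φ i t * ((μ (i + 1) - μ i) / Δx) ^ 2 := by
    calc _ = -∑ i ∈ Icc 1 I, μ i * (F i t - F (i - 1) t) := by
          rw [mul_sum, ← sum_neg_distrib]
          refine sum_congr rfl fun i _ => ?_
          field_simp
        _ = ∑ i ∈ Icc 1 (I - 1), (μ (i + 1) - μ i) * F i t := by
          rw [sum_Icc_mul_sub_of_boundary_eq_zero (hF0 t) (hFI t), neg_neg]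
        _ = _ := by
          rw [mul_sum]
          refine sum_congr rfl fun i hi => ?_
          rw [hF i hi t ht]
          field_simp
          ring
  refine ⟨dissipation ▸ energy, ?_⟩
  rw [neg_mul, neg_nonpos]
  exact mul_nonneg hΔx_pos.le (sum_nonneg fun i _ => mul_nonneg (hφ i t ht) (sq_nonneg _))

/-- semi-discrete gradient-flow energy dissipation,
generalized Keller-Segel case. -/
theorem semidiscrete_gradient_flow_energy_dissipation_GKS
    (I : ℕ) (hI : 1 ≤ I) (Δx : ℝ) (hΔx : Δx = 1 / (I : ℝ))
    (J : Set ℝ) (hJopen : IsOpen J) (hJconn : J.OrdConnected)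
    (g G : ℝ → ℝ) (hG : ∀ x : ℝ, HasDerivAt G (g x) x)
    (K : ℕ → ℕ → ℝ) (hK : ∀ i j, K i j = K j i)
    (u : ℕ → ℝ → ℝ) (φ : ℕ → ℝ → ℝ)
    (v : ℕ → ℝ → ℝ)
    (hv : ∀ i, ∀ t : ℝ, v i t = ∑ j ∈ Finset.Icc 1 I, K i j * u j t)
    (hφ : ∀ i, ∀ t ∈ J, 0 ≤ φ i t)
    (F : ℕ → ℝ → ℝ)
    (hF0 : ∀ t, F 0 t = 0) (hFI : ∀ t, F I t = 0)
    (hF : ∀ i ∈ Finset.Icc 1 (I - 1), ∀ t ∈ J,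
      F i t = -(φ i t / Δx) * ((g (u (i + 1) t) - v (i + 1) t) - (g (u i t) - v i t)))
    (hode : ∀ i ∈ Finset.Icc 1 I, ∀ t ∈ J,
      HasDerivAt (u i) (-(1 / Δx) * (F i t - F (i - 1) t)) t) :
    ∀ t ∈ J,
      HasDerivAt
        (fun s => Δx * ∑ i ∈ Finset.Icc 1 I, (G (u i s) - (1 / 2) * u i s * v i s))
        (-Δx * ∑ i ∈ Finset.Icc 1 (I - 1),
          φ i t * (((g (u (i + 1) t) - v (i + 1) t) - (g (u i t) - v i t)) / Δx) ^ 2) t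
      ∧ -Δx * ∑ i ∈ Finset.Icc 1 (I - 1),
          φ i t * (((g (u (i + 1) t) - v (i + 1) t) - (g (u i t) - v i t)) / Δx) ^ 2 ≤ 0 :=
  semidiscrete_gradient_flow_energy_dissipation_GKS_general I hI Δx hΔx J g G hG K hK u φ v hv hφ F
    hF0 hFI hF hode
end

section
/- Semi-discrete Scharfetter-Gummel energy dissipation, Fokker-Planck case: suppose u_1,...,u_I : J → ℝ solve, on the open interval J, u_i'(t) + (1/Δx)(F_{i+1/2}(t) − F_{i−1/2}(t)) = 0 for i = 1,...,I, where F_{1/2} = F_{I+1/2} = 0 and, for 1 ≤ i ≤ I−1, F_{i+1/2}(t) = −(c_{i+1/2}(t)/Δx)[ exp(g(u_{i+1}(t)) − v_{i+1}) − exp(g(u_i(t)) − v_i) ] with nonnegative functions c_{i+1/2} : J → ℝ and fixed reals v_1,...,v_I. Then, writing x_i(t) = g(u_i(t)) − v_i, for every t ∈ J, (d/dt)[ Δx Σ_{i=1}^I ( G(u_i(t)) − u_i(t) v_i ) ] = −(1/Δx) Σ_{i=1}^{I−1} c_{i+1/2}(t) ( exp(x_{i+1}(t)) − exp(x_i(t))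 ) ( x_{i+1}(t) − x_i(t) ), which is ≤ 0. -/
/-!
The energy has derivative `Δx ∑ xᵢ uᵢ'` with `xᵢ = g(uᵢ) - vᵢ`. Inserting the flux form of the
equations and summing by parts (the boundary fluxes vanish) turns it into
`∑ (x_{i+1} - xᵢ) F_{i+1/2}`, and substituting the Scharfetter–Gummel flux gives the dissipation,
whose terms `c (exp x_{i+1} - exp xᵢ)(x_{i+1} - xᵢ)` are nonnegative because `exp` is monotone.
-/

open Finset

theorem sum_Icc_mul_sub_pred_eq {R : Type*} [CommRing R] (a F : ℕ → R) (n : ℕ) :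
    ∑ i ∈ Icc 1 (n + 1), a i * (F i - F (i - 1)) =
      a (n + 1) * F (n + 1) - a 1 * F 0 - ∑ i ∈ Icc 1 n, (a (i + 1) - a i) * F i := by
  induction n with
  | zero => simp [mul_sub]
  | succ n ih =>
    rw [sum_Icc_succ_top (by omega), ih, sum_Icc_succ_top (by omega), add_tsub_cancel_right]
    ring

theorem sum_Icc_mul_sub_pred_eq_of_boundary_zero {R : Type*} [CommRing R] (a F : ℕ → R)
    {n : ℕ} (h0 : F 0 = 0) (hn : F n = 0) :
    ∑ i ∈ Icc 1 n, a i * (F i - F (i - 1)) = -∑ i ∈ Icc 1 (n - 1), (a (i + 1) - a i) * F i := by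
  cases n with
  | zero => simp
  | succ n => rw [sum_Icc_mul_sub_pred_eq, h0, hn, add_tsub_cancel_right]; ring

theorem mul_exp_sub_exp_mul_sub_nonneg {c : ℝ} (hc : 0 ≤ c) (x y : ℝ) :
    0 ≤ c * (Real.exp y - Real.exp x) * (y - x) := by
  rw [mul_assoc]
  exact mul_nonneg hc ((Real.exp_monotone.monovary monotone_id).sub_mul_sub_nonneg x y)

theorem HasDerivAt.comp_sub_mul_const {G u : ℝ → ℝ} {y u' t : ℝ}
    (hG : HasDerivAt G y (u t)) (hu : HasDerivAt u u' t) (v : ℝ) :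
    HasDerivAt (fun s => G (u s) - u s * v) ((y - v) * u') t :=
  ((hG.comp t hu).sub (hu.mul_const v)).congr_deriv (by ring)

theorem semidiscrete_scharfetter_gummel_energy_dissipation_FP_general
    (I : ℕ) (hI : 1 ≤ I) (Δx : ℝ) (hΔx : Δx = 1 / (I : ℝ))
    (J : Set ℝ)
    (g G : ℝ → ℝ) (hG : ∀ x : ℝ, HasDerivAt G (g x) x)
    (u : ℕ → ℝ → ℝ) (c : ℕ → ℝ → ℝ) (v : ℕ → ℝ)
    (hc : ∀ i, ∀ t ∈ J, 0 ≤ c i t)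
    (F : ℕ → ℝ → ℝ)
    (hF0 : ∀ t, F 0 t = 0) (hFI : ∀ t, F I t = 0)
    (hF : ∀ i ∈ Finset.Icc 1 (I - 1), ∀ t ∈ J,
      F i t = -(c i t / Δx) *
        (Real.exp (g (u (i + 1) t) - v (i + 1)) - Real.exp (g (u i t) - v i)))
    (hode : ∀ i ∈ Finset.Icc 1 I, ∀ t ∈ J,
      HasDerivAt (u i) (-(1 / Δx) * (F i t - F (i - 1) t)) t) :
    ∀ t ∈ J,
      HasDerivAt
        (fun s => Δx * ∑ i ∈ Finset.Icc 1 I, (G (u i s) - u i s * v i))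
        (-(1 / Δx) * ∑ i ∈ Finset.Icc 1 (I - 1),
          c i t * (Real.exp (g (u (i + 1) t) - v (i + 1)) - Real.exp (g (u i t) - v i))
            * ((g (u (i + 1) t) - v (i + 1)) - (g (u i t) - v i))) t
      ∧ -(1 / Δx) * ∑ i ∈ Finset.Icc 1 (I - 1),
          c i t * (Real.exp (g (u (i + 1) t) - v (i + 1)) - Real.exp (g (u i t) - v i))
            * ((g (u (i + 1) t) - v (i + 1)) - (g (u i t) - v i)) ≤ 0 := by
  intro t ht
  have hΔx_pos : 0 < Δx := by rw [hΔx]; positivity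
  have hderiv := ((HasDerivAt.fun_sum fun i hi =>
    (hG (u i t)).comp_sub_mul_const (hode i hi t ht) (v i)).const_mul Δx)
  refine ⟨hderiv.congr_deriv ?_, ?_⟩
  · calc Δx * ∑ i ∈ Icc 1 I, (g (u i t) - v i) * (-(1 / Δx) * (F i t - F (i - 1) t))
        = -∑ i ∈ Icc 1 I, (g (u i t) - v i) * (F i t - F (i - 1) t) := by
          rw [mul_sum, ← sum_neg_distrib]
          exact sum_congr rfl fun i _ => by field_simp
      _ = ∑ i ∈ Icc 1 (I - 1), ((g (u (i + 1) t) - v (i + 1)) - (g (u i t) - v i)) * F i t := by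
          rw [sum_Icc_mul_sub_pred_eq_of_boundary_zero (fun i => g (u i t) - v i) (F · t)
            (hF0 t) (hFI t), neg_neg]
      _ = _ := by
          rw [mul_sum]
          refine sum_congr rfl fun i hi => ?_
          rw [hF i hi t ht]
          ring
  · exact mul_nonpos_of_nonpos_of_nonneg (by simpa using hΔx_pos.le)
      (sum_nonneg fun i _ => mul_exp_sub_exp_mul_sub_nonneg (hc i t ht) _ _)

/-- semi-discrete Scharfetter-Gummel energy dissipation,
Fokker-Planck case. -/
theorem semidiscrete_scharfetter_gummel_energy_dissipation_FP
    (I : ℕ) (hI : 1 ≤ I) (Δx : ℝ) (hΔx : Δx = 1 / (I : ℝ))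
    (J : Set ℝ) (hJopen : IsOpen J) (hJconn : J.OrdConnected)
    (g G : ℝ → ℝ) (hG : ∀ x : ℝ, HasDerivAt G (g x) x)
    (u : ℕ → ℝ → ℝ) (c : ℕ → ℝ → ℝ) (v : ℕ → ℝ)
    (hc : ∀ i, ∀ t ∈ J, 0 ≤ c i t)
    (F : ℕ → ℝ → ℝ)
    (hF0 : ∀ t, F 0 t = 0) (hFI : ∀ t, F I t = 0)
    (hF : ∀ i ∈ Finset.Icc 1 (I - 1), ∀ t ∈ J,
      F i t = -(c i t / Δx) *
        (Real.exp (g (u (i + 1) t) - v (i + 1)) - Real.exp (g (u i t) - v i)))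
    (hode : ∀ i ∈ Finset.Icc 1 I, ∀ t ∈ J,
      HasDerivAt (u i) (-(1 / Δx) * (F i t - F (i - 1) t)) t) :
    ∀ t ∈ J,
      HasDerivAt
        (fun s => Δx * ∑ i ∈ Finset.Icc 1 I, (G (u i s) - u i s * v i))
        (-(1 / Δx) * ∑ i ∈ Finset.Icc 1 (I - 1),
          c i t * (Real.exp (g (u (i + 1) t) - v (i + 1)) - Real.exp (g (u i t) - v i))
            * ((g (u (i + 1) t) - v (i + 1)) - (g (u i t) - v i))) t
      ∧ -(1 / Δx) * ∑ i ∈ Finset.Icc 1 (I - 1),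
          c i t * (Real.exp (g (u (i + 1) t) - v (i + 1)) - Real.exp (g (u i t) - v i))
            * ((g (u (i + 1) t) - v (i + 1)) - (g (u i t) - v i)) ≤ 0 :=
  semidiscrete_scharfetter_gummel_energy_dissipation_FP_general I hI Δx hΔx J g G hG u c v hc F hF0
    hFI hF hode
end

section
/- Discrete time-stepping energy inequality: let K ∈ ℝ^{I×I} be symmetric and positive semidefinite (Σ_{i,j} K_{ij} w_i w_j ≥ 0 for all w ∈ ℝ^I), let G : ℝ → ℝ be convex and differentiable with derivative g, let u, w ∈ ℝ^I, and set v = Ku, v' = Kw. Then Σ_{i=1}^I [ ( G(w_i) − (1/2) w_i v'_i ) − ( G(u_i) − (1/2) u_i v_i ) ] ≤ Σ_{i=1}^I ( w_i − u_i ) ( g(w_i) − v_i ). -/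
lemma convex_grad_ineq {G g : ℝ → ℝ} (hGconv : ConvexOn ℝ Set.univ G)
    (hG : ∀ x : ℝ, HasDerivAt G (g x) x) (a b : ℝ) :
    G b - G a ≤ g b * (b - a) := by
  rcases lt_trichotomy a b with h | h | h
  · have := hGconv.slope_le_of_hasDerivAt (Set.mem_univ a) (Set.mem_univ b) h (hG b)
    rw [slope_def_field, div_le_iff₀ (by linarith)] at this
    linarith
  · simp [h]
  · have := hGconv.le_slope_of_hasDerivAt (Set.mem_univ b) (Set.mem_univ a) h (hG b)
    rw [slope_def_field, le_div_iff₀ (by linarith)] at this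
    have h2 : g b * (a - b) ≤ G a - G b := by linarith
    nlinarith

/-- discrete time-stepping energy inequality justifying the
implicit-in-`u`, explicit-in-`v` discretization (generalized Keller-Segel, κ = 1/2). -/
theorem discrete_time_stepping_energy_inequality
    (I : ℕ) (hI : 1 ≤ I)
    (K : Fin I → Fin I → ℝ)
    (hKsym : ∀ i j, K i j = K j i)
    (hKpsd : ∀ w : Fin I → ℝ, 0 ≤ ∑ i, ∑ j, K i j * w i * w j)
    (G g : ℝ → ℝ)
    (hGconv : ConvexOn ℝ Set.univ G)
    (hG : ∀ x : ℝ, HasDerivAt G (g x) x)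
    (u w v v' : Fin I → ℝ)
    (hv : ∀ i, v i = ∑ j, K i j * u j)
    (hv' : ∀ i, v' i = ∑ j, K i j * w j) :
    ∑ i, ((G (w i) - (1 / 2) * w i * v' i) - (G (u i) - (1 / 2) * u i * v i))
      ≤ ∑ i, (w i - u i) * (g (w i) - v i) := by
  set Q : (Fin I → ℝ) → (Fin I → ℝ) → ℝ := fun x y => ∑ i, ∑ j, K i j * x i * y j with hQ
  have hQsymm : ∀ x y, Q x y = Q y x := by
    intro x y
    rw [hQ]
    simp only
    rw [Finset.sum_comm]
    apply Finset.sum_congr rfl; intro i _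
    apply Finset.sum_congr rfl; intro j _
    rw [hKsym]; ring
  have hdot : ∀ x y : Fin I → ℝ, ∑ i, x i * (∑ j, K i j * y j) = Q x y := by
    intro x y
    apply Finset.sum_congr rfl; intro i _
    rw [Finset.mul_sum]
    apply Finset.sum_congr rfl; intro j _
    ring
  have hpsd := hKpsd (fun i => w i - u i)
  have hexp : ∑ i, ∑ j, K i j * (w i - u i) * (w j - u j)
      = Q w w - Q w u - Q u w + Q u u := by
    rw [hQ]; simp only
    simp only [← Finset.sum_add_distrib, ← Finset.sum_sub_distrib]
    apply Finset.sum_congr rfl; intro i _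
    apply Finset.sum_congr rfl; intro j _
    ring
  -- quadratic part
  have hquad : ∑ i, ((- (1/2) * w i * v' i) - (- (1/2) * u i * v i)) ≤ ∑ i, (w i - u i) * (- v i) := by
    have h1 : ∑ i, w i * v' i = Q w w := by
      simp only [hv']; exact hdot w w
    have h2 : ∑ i, u i * v i = Q u u := by
      simp only [hv]; exact hdot u u
    have h3 : ∑ i, (w i - u i) * v i = Q w u - Q u u := by
      rw [← Finset.sum_sub_distrib]
      have : ∀ i, (w i - u i) * v i = w i * v i - u i * v i := fun i => by ring
      simp_rw [this, Finset.sum_sub_distrib, h2, hv]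
      rw [hdot w u]
    have hsym := hQsymm w u
    have hLHS : ∑ i, ((- (1/2) * w i * v' i) - (- (1/2) * u i * v i))
        = -(1/2) * Q w w + (1/2) * Q u u := by
      rw [Finset.sum_sub_distrib]
      have e1 : ∑ i, (- (1/2) * w i * v' i) = -(1/2) * ∑ i, w i * v' i := by
        rw [Finset.mul_sum]; apply Finset.sum_congr rfl; intro i _; ring
      have e2 : ∑ i, (- (1/2) * u i * v i) = -(1/2) * ∑ i, u i * v i := by
        rw [Finset.mul_sum]; apply Finset.sum_congr rfl; intro i _; ring
      rw [e1, e2, h1, h2]; ring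
    have hRHS : ∑ i, (w i - u i) * (- v i) = -(Q w u - Q u u) := by
      rw [← h3, ← Finset.sum_neg_distrib]
      apply Finset.sum_congr rfl; intro i _; ring
    rw [hLHS, hRHS]
    rw [hexp] at hpsd
    linarith
  -- convex part
  have hconvpart : ∑ i, (G (w i) - G (u i)) ≤ ∑ i, (w i - u i) * g (w i) := by
    apply Finset.sum_le_sum
    intro i _
    have := convex_grad_ineq hGconv hG (u i) (w i)
    nlinarith
  calc ∑ i, ((G (w i) - (1 / 2) * w i * v' i) - (G (u i) - (1 / 2) * u i * v i))
      = ∑ i, (G (w i) - G (u i)) + ∑ i, ((- (1/2) * w i * v' i) - (- (1/2) * u i * v i)) := by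
        rw [← Finset.sum_add_distrib]; apply Finset.sum_congr rfl; intro i _; ring
    _ ≤ ∑ i, (w i - u i) * g (w i) + ∑ i, (w i - u i) * (- v i) := add_le_add hconvpart hquad
    _ = ∑ i, (w i - u i) * (g (w i) - v i) := by
        rw [← Finset.sum_add_distrib]; apply Finset.sum_congr rfl; intro i _; ring
end

section
/- Fully discrete gradient-flow energy dissipation (generalized Keller-Segel): let K ∈ ℝ^{I×I} be symmetric and positive semidefinite, let G : ℝ → ℝ be convex and differentiable with G' = g, let Δt > 0, Δx = 1/I, let u^n, u^{n+1} ∈ ℝ^I, set v^n = K u^n and v^{n+1} = K u^{n+1}, and suppose that for some nonnegative reals φ_{i+1/2} ≥ 0 (i = 1,...,I−1) one has u_i^{n+1} − u_i^n + (Δt/Δx)(F_{i+1/2} − F_{i−1/2}) = 0 for i = 1,...,I, where F_{1/2} = F_{I+1/2} = 0 and F_{i+1/2} = −(φ_{i+1/2}/Δx)[ (g(u_{i+1}^{n+1}) − v_{i+1}^n) − (g(u_i^{n+1}) − v_i^n) ]. Then, with 𝔈^m = Δx Σ_{i=1}^I ( G(u_i^m) − (1/2) u_i^m v_i^m ), one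 has 𝔈^{n+1} − 𝔈^n ≤ −(Δt/Δx) Σ_{i=1}^{I−1} φ_{i+1/2} [ (g(u_{i+1}^{n+1}) − v_{i+1}^n) − (g(u_i^{n+1}) − v_i^n) ]² ≤ 0. -/
open Finset

/-- Gradient inequality for a convex differentiable function. -/
lemma grad_ineq (G g : ℝ → ℝ) (hGconv : ConvexOn ℝ Set.univ G)
    (hG : ∀ x : ℝ, HasDerivAt G (g x) x) (a b : ℝ) :
    g b * (a - b) ≤ G a - G b := by
  rcases lt_trichotomy a b with h | h | h
  · have hs := hGconv.slope_le_of_hasDerivAt (Set.mem_univ a) (Set.mem_univ b) h (hG b)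
    rw [slope_def_field] at hs
    have hba : (0:ℝ) < b - a := by linarith
    rw [div_le_iff₀ hba] at hs
    nlinarith
  · simp [h]
  · have hs := hGconv.le_slope_of_hasDerivAt (Set.mem_univ b) (Set.mem_univ a) h (hG b)
    rw [slope_def_field] at hs
    have hab : (0:ℝ) < a - b := by linarith
    rw [le_div_iff₀ hab] at hs
    nlinarith

/-- Summation by parts (Abel) for Icc 1 n. -/
lemma abel_sum (F ψ : ℕ → ℝ) :
    ∀ n : ℕ, 1 ≤ n →
      ∑ i ∈ Icc 1 n, (F i - F (i - 1)) * ψ i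
        = F n * ψ n - F 0 * ψ 1 - ∑ i ∈ Icc 1 (n - 1), F i * (ψ (i + 1) - ψ i) := by
  intro n hn
  induction n, hn using Nat.le_induction with
  | base => simp; ring
  | succ n hn ih =>
    have hr : ∑ i ∈ Icc 1 n, F i * (ψ (i + 1) - ψ i)
        = ∑ i ∈ Icc 1 (n - 1), F i * (ψ (i + 1) - ψ i) + F n * (ψ (n + 1) - ψ n) := by
      conv_lhs => rw [show n = n - 1 + 1 from (Nat.sub_add_cancel hn).symm]
      rw [Finset.sum_Icc_succ_top (by omega : 1 ≤ n - 1 + 1), Nat.sub_add_cancel hn]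
    rw [Finset.sum_Icc_succ_top (by omega : 1 ≤ n + 1), Nat.add_sub_cancel, ih, hr]
    ring

/-- fully discrete gradient-flow energy dissipation
(generalized Keller-Segel), with no restriction on the time step. -/
theorem fully_discrete_gradient_flow_energy_dissipation
    (I : ℕ) (hI : 1 ≤ I) (Δt Δx : ℝ) (hΔt : 0 < Δt) (hΔx : Δx = 1 / (I : ℝ))
    (K : ℕ → ℕ → ℝ)
    (hKsym : ∀ i j, K i j = K j i)
    (hKpsd : ∀ w : ℕ → ℝ,
      0 ≤ ∑ i ∈ Finset.Icc 1 I, ∑ j ∈ Finset.Icc 1 I, K i j * w i * w j)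
    (G g : ℝ → ℝ)
    (hGconv : ConvexOn ℝ Set.univ G)
    (hG : ∀ x : ℝ, HasDerivAt G (g x) x)
    (un un1 vn vn1 : ℕ → ℝ)
    (hvn : ∀ i, vn i = ∑ j ∈ Finset.Icc 1 I, K i j * un j)
    (hvn1 : ∀ i, vn1 i = ∑ j ∈ Finset.Icc 1 I, K i j * un1 j)
    (φ : ℕ → ℝ) (hφ : ∀ i ∈ Finset.Icc 1 (I - 1), 0 ≤ φ i)
    (F : ℕ → ℝ) (hF0 : F 0 = 0) (hFI : F I = 0)
    (hF : ∀ i ∈ Finset.Icc 1 (I - 1),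
      F i = -(φ i / Δx) * ((g (un1 (i + 1)) - vn (i + 1)) - (g (un1 i) - vn i)))
    (hscheme : ∀ i ∈ Finset.Icc 1 I, un1 i - un i + (Δt / Δx) * (F i - F (i - 1)) = 0) :
    Δx * ∑ i ∈ Finset.Icc 1 I, (G (un1 i) - (1 / 2) * un1 i * vn1 i)
      - Δx * ∑ i ∈ Finset.Icc 1 I, (G (un i) - (1 / 2) * un i * vn i)
      ≤ -(Δt / Δx) * ∑ i ∈ Finset.Icc 1 (I - 1),
          φ i * ((g (un1 (i + 1)) - vn (i + 1)) - (g (un1 i) - vn i)) ^ 2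
    ∧ -(Δt / Δx) * ∑ i ∈ Finset.Icc 1 (I - 1),
          φ i * ((g (un1 (i + 1)) - vn (i + 1)) - (g (un1 i) - vn i)) ^ 2 ≤ 0 := by
  have hIpos : (0:ℝ) < (I : ℝ) := by exact_mod_cast Nat.lt_of_lt_of_le Nat.zero_lt_one hI
  have hΔx0 : 0 < Δx := by rw [hΔx]; positivity
  set S := Finset.Icc 1 I with hS
  set T := Finset.Icc 1 (I - 1) with hT
  set ψ : ℕ → ℝ := fun i => g (un1 i) - vn i with hψ
  set δ : ℕ → ℝ := fun i => un1 i - un i with hδ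
  -- nonnegativity of the dissipation sum
  have hsum_nonneg : 0 ≤ ∑ i ∈ T, φ i * (ψ (i + 1) - ψ i) ^ 2 := by
    apply Finset.sum_nonneg
    intro i hi
    exact mul_nonneg (hφ i hi) (sq_nonneg _)
  have hfac : 0 < Δt / Δx := div_pos hΔt hΔx0
  have hsecond : -(Δt / Δx) * ∑ i ∈ T, φ i * (ψ (i + 1) - ψ i) ^ 2 ≤ 0 := by
    have := mul_nonneg hfac.le hsum_nonneg
    nlinarith
  -- convexity estimate
  have hconv : ∑ i ∈ S, (G (un1 i) - G (un i)) ≤ ∑ i ∈ S, g (un1 i) * δ i := by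
    apply Finset.sum_le_sum
    intro i _
    have := grad_ineq G g hGconv hG (un i) (un1 i)
    simp only [hδ]
    nlinarith
  -- quadratic identity
  have hquad : ∑ i ∈ S, (un1 i * vn1 i - un i * vn i)
      = ∑ i ∈ S, δ i * vn1 i + ∑ i ∈ S, δ i * vn i := by
    have key : ∑ i ∈ S, un i * (vn1 i - vn i) = ∑ j ∈ S, δ j * vn j := by
      calc ∑ i ∈ S, un i * (vn1 i - vn i)
          = ∑ i ∈ S, ∑ j ∈ S, un i * (K i j * δ j) := by
            apply Finset.sum_congr rfl
            intro i _
            rw [hvn1 i, hvn i, ← Finset.sum_sub_distrib, Finset.mul_sum]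
            apply Finset.sum_congr rfl
            intro j _
            simp only [hδ]; ring
        _ = ∑ j ∈ S, ∑ i ∈ S, un i * (K i j * δ j) := Finset.sum_comm
        _ = ∑ j ∈ S, δ j * vn j := by
            apply Finset.sum_congr rfl
            intro j _
            rw [hvn j, Finset.mul_sum]
            apply Finset.sum_congr rfl
            intro i _
            rw [hKsym i j]; ring
    calc ∑ i ∈ S, (un1 i * vn1 i - un i * vn i)
        = ∑ i ∈ S, (δ i * vn1 i + un i * (vn1 i - vn i)) := by
          apply Finset.sum_congr rfl; intro i _; simp only [hδ]; ring
      _ = ∑ i ∈ S, δ i * vn1 i + ∑ i ∈ S, un i * (vn1 i - vn i) := Finset.sum_add_distrib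
      _ = ∑ i ∈ S, δ i * vn1 i + ∑ i ∈ S, δ i * vn i := by rw [key]
  -- positive semidefiniteness
  have hpsd : 0 ≤ ∑ i ∈ S, δ i * vn1 i - ∑ i ∈ S, δ i * vn i := by
    have h := hKpsd δ
    have : ∑ i ∈ S, δ i * vn1 i - ∑ i ∈ S, δ i * vn i
        = ∑ i ∈ S, ∑ j ∈ S, K i j * δ i * δ j := by
      rw [← Finset.sum_sub_distrib]
      apply Finset.sum_congr rfl
      intro i _
      rw [hvn1 i, hvn i, Finset.mul_sum, Finset.mul_sum, ← Finset.sum_sub_distrib]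
      apply Finset.sum_congr rfl
      intro j _
      simp only [hδ]; ring
    rw [this]; exact h
  -- scheme rewrite: δ i = -(Δt/Δx) * (F i - F (i-1))
  have hδeq : ∀ i ∈ S, δ i = -(Δt / Δx) * (F i - F (i - 1)) := by
    intro i hi
    have := hscheme i hi
    simp only [hδ]; linarith
  -- Abel summation
  have habel : ∑ i ∈ S, (F i - F (i - 1)) * ψ i
      = -∑ i ∈ T, F i * (ψ (i + 1) - ψ i) := by
    rw [abel_sum F ψ I hI, hF0, hFI]
    ring
  -- flux substitution
  have hflux : ∑ i ∈ T, F i * (ψ (i + 1) - ψ i)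
      = -(1 / Δx) * ∑ i ∈ T, φ i * (ψ (i + 1) - ψ i) ^ 2 := by
    rw [Finset.mul_sum]
    apply Finset.sum_congr rfl
    intro i hi
    rw [hF i hi]
    simp only [hψ]
    ring
  -- key sum identity
  have hkey : Δx * ∑ i ∈ S, δ i * ψ i
      = -(Δt / Δx) * ∑ i ∈ T, φ i * (ψ (i + 1) - ψ i) ^ 2 := by
    have h1 : ∑ i ∈ S, δ i * ψ i = -(Δt / Δx) * ∑ i ∈ S, (F i - F (i - 1)) * ψ i := by
      rw [Finset.mul_sum]
      apply Finset.sum_congr rfl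
      intro i hi
      rw [hδeq i hi]; ring
    rw [h1, habel, hflux]
    have hone : Δx * (1 / Δx) = 1 := by field_simp
    linear_combination (-(Δt / Δx) * (∑ i ∈ T, φ i * (ψ (i + 1) - ψ i) ^ 2)) * hone
  -- assemble
  constructor
  · have expand : Δx * ∑ i ∈ S, (G (un1 i) - (1 / 2) * un1 i * vn1 i)
        - Δx * ∑ i ∈ S, (G (un i) - (1 / 2) * un i * vn i)
        = Δx * ∑ i ∈ S, (G (un1 i) - G (un i))
          - (Δx / 2) * ∑ i ∈ S, (un1 i * vn1 i - un i * vn i) := by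
      simp only [Finset.mul_sum, ← Finset.sum_sub_distrib]
      apply Finset.sum_congr rfl
      intro i _
      ring
    rw [expand, hquad]
    have step1 : Δx * ∑ i ∈ S, (G (un1 i) - G (un i))
        - Δx / 2 * (∑ i ∈ S, δ i * vn1 i + ∑ i ∈ S, δ i * vn i)
        ≤ Δx * ∑ i ∈ S, g (un1 i) * δ i - Δx * ∑ i ∈ S, δ i * vn i := by
      have h1 : Δx * ∑ i ∈ S, (G (un1 i) - G (un i)) ≤ Δx * ∑ i ∈ S, g (un1 i) * δ i :=
        mul_le_mul_of_nonneg_left hconv hΔx0.le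
      nlinarith [mul_nonneg (by linarith : (0:ℝ) ≤ Δx / 2) hpsd]
    have step2 : Δx * ∑ i ∈ S, g (un1 i) * δ i - Δx * ∑ i ∈ S, δ i * vn i
        = Δx * ∑ i ∈ S, δ i * ψ i := by
      rw [← mul_sub, ← Finset.sum_sub_distrib]
      congr 1
      apply Finset.sum_congr rfl
      intro i _
      simp only [hψ]; ring
    calc Δx * ∑ i ∈ S, (G (un1 i) - G (un i))
          - Δx / 2 * (∑ i ∈ S, δ i * vn1 i + ∑ i ∈ S, δ i * vn i)
        ≤ Δx * ∑ i ∈ S, g (un1 i) * δ i - Δx * ∑ i ∈ S, δ i * vn i := step1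
      _ = Δx * ∑ i ∈ S, δ i * ψ i := step2
      _ = -(Δt / Δx) * ∑ i ∈ T, φ i * (ψ (i + 1) - ψ i) ^ 2 := hkey
  · exact hsecond
end

section
/- Fully discrete Scharfetter-Gummel energy dissipation (generalized Keller-Segel): let K ∈ ℝ^{I×I} be symmetric and positive semidefinite, let G : ℝ → ℝ be convex and differentiable with G' = g, let Δt > 0, Δx = 1/I, let u^n, u^{n+1} ∈ ℝ^I, set v^n = K u^n, v^{n+1} = K u^{n+1}, and suppose that for some nonnegative reals c_{i+1/2} ≥ 0 (i = 1,...,I−1) one has u_i^{n+1} − u_i^n + (Δt/Δx)(F_{i+1/2} − F_{i−1/2}) = 0 for i = 1,...,I, where F_{1/2} = F_{I+1/2} = 0 and F_{i+1/2} = −(c_{i+1/2}/Δx)[ exp(g(u_{i+1}^{n+1}) − v_{i+1}^n) − exp(g(u_i^{n+1}) − v_i^n) ]. Then, writing x_i = g(u_i^{n+1}) − v_i^n and 𝔈^m = Δx Σ_{i=1}^I ( G(u_i^m) − (1/2) u_i^m v_i^m ), one has 𝔈^{n+1} − 𝔈^n ≤ −(Δt/Δx) Σ_{i=1}^{I−1}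 c_{i+1/2} ( exp(x_{i+1}) − exp(x_i) ) ( x_{i+1} − x_i ) ≤ 0. -/
/-!
Test the scheme against `x_i = g(u_i^{n+1}) - v_i^n`. Since the boundary fluxes vanish, summation
by parts turns `Σ_i x_i (u_i^{n+1} - u_i^n)` into
`-(Δt/Δx²) Σ_i c_{i+1/2} (exp x_{i+1} - exp x_i)(x_{i+1} - x_i)`, which is nonpositive because
`exp` is monotone. The energy increment is at most `Δx` times the tested sum: the entropy part by
the tangent-line inequality for the convex `G` at `u^{n+1}`, and the interaction part because for
symmetric positive semidefinite `K` the quadratic form `Q(w) = ⟨K w, w⟩` satisfies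
`Q(u') - Q(u) = Q(u' - u) + 2 ⟨K u, u' - u⟩ ≥ 2 ⟨K u, u' - u⟩`.
-/

open Finset

lemma ConvexOn.sub_le_mul_sub_of_hasDerivAt {S : Set ℝ} {f : ℝ → ℝ} {f' x y : ℝ}
    (hf : ConvexOn ℝ S f) (hx : x ∈ S) (hy : y ∈ S) (hderiv : HasDerivAt f f' x) :
    f x - f y ≤ f' * (x - y) := by
  rcases lt_trichotomy x y with hxy | rfl | hyx
  · have h := hf.le_slope_of_hasDerivAt hx hy hxy hderiv
    rw [slope_def_field, le_div_iff₀ (sub_pos.2 hxy)] at h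
    linarith
  · simp
  · have h := hf.slope_le_of_hasDerivAt hy hx hyx hderiv
    rw [slope_def_field, div_le_iff₀ (sub_pos.2 hyx)] at h
    linarith

lemma Monotone.sub_mul_sub_nonneg {α : Type*} [Ring α] [LinearOrder α] [IsStrictOrderedRing α]
    {f : α → α} (hf : Monotone f) (a b : α) : 0 ≤ (f b - f a) * (b - a) := by
  rcases le_total a b with hab | hba
  · exact mul_nonneg (sub_nonneg.2 (hf hab)) (sub_nonneg.2 hab)
  · exact mul_nonneg_of_nonpos_of_nonpos (sub_nonpos.2 (hf hba)) (sub_nonpos.2 hba)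

section SummationByParts

variable {R : Type*} [CommRing R] (x F : ℕ → R)

lemma sum_Icc_mul_sub_by_parts (n : ℕ) :
    ∑ i ∈ Icc 1 (n + 1), x i * (F i - F (i - 1))
      = x (n + 1) * F (n + 1) - x 1 * F 0 - ∑ i ∈ Icc 1 n, (x (i + 1) - x i) * F i := by
  induction n with
  | zero => simp [mul_sub]
  | succ n ih =>
    rw [sum_Icc_succ_top (by omega), ih, sum_Icc_succ_top (by omega), Nat.add_sub_cancel]
    ring

lemma sum_Icc_mul_sub_by_parts_of_boundary_eq_zero {n : ℕ} (hF0 : F 0 = 0) (hFn : F n = 0) :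
    ∑ i ∈ Icc 1 n, x i * (F i - F (i - 1))
      = -∑ i ∈ Icc 1 (n - 1), (x (i + 1) - x i) * F i := by
  cases n with
  | zero => simp
  | succ n => rw [sum_Icc_mul_sub_by_parts, hF0, hFn, Nat.add_sub_cancel]; ring

end SummationByParts

section QuadraticForm

variable {ι : Type*} (s : Finset ι) {K : ι → ι → ℝ}

lemma two_mul_sum_mul_sub_le_of_posSemidef (hsym : ∀ i j, K i j = K j i) (u u' : ι → ℝ)
    (hpsd : 0 ≤ ∑ i ∈ s, ∑ j ∈ s, K i j * (u' i - u i) * (u' j - u j)) :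
    2 * ∑ i ∈ s, (∑ j ∈ s, K i j * u j) * (u' i - u i)
      ≤ ∑ i ∈ s, u' i * ∑ j ∈ s, K i j * u' j - ∑ i ∈ s, u i * ∑ j ∈ s, K i j * u j := by
  have hswap : ∑ i ∈ s, ∑ j ∈ s, K i j * u i * u' j
      = ∑ i ∈ s, ∑ j ∈ s, K i j * u j * u' i := by
    rw [sum_comm]
    exact sum_congr rfl fun i _ => sum_congr rfl fun j _ => by rw [hsym]
  have hpolar : (∑ i ∈ s, u' i * ∑ j ∈ s, K i j * u' j - ∑ i ∈ s, u i * ∑ j ∈ s, K i j * u j)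
      - 2 * ∑ i ∈ s, (∑ j ∈ s, K i j * u j) * (u' i - u i)
      = ∑ i ∈ s, ∑ j ∈ s, K i j * (u' i - u i) * (u' j - u j)
        + (∑ i ∈ s, ∑ j ∈ s, K i j * u i * u' j - ∑ i ∈ s, ∑ j ∈ s, K i j * u j * u' i) := by
    simp only [mul_sum, sum_mul, ← sum_sub_distrib, ← sum_add_distrib]
    exact sum_congr rfl fun i _ => sum_congr rfl fun j _ => by ring
  linarith

lemma sum_energy_sub_le {G g : ℝ → ℝ} (hconv : ConvexOn ℝ Set.univ G)
    (hderiv : ∀ x, HasDerivAt G (g x) x) (hsym : ∀ i j, K i j = K j i)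
    (hpsd : ∀ w : ι → ℝ, 0 ≤ ∑ i ∈ s, ∑ j ∈ s, K i j * w i * w j) {u u' v v' : ι → ℝ}
    (hv : ∀ i, v i = ∑ j ∈ s, K i j * u j) (hv' : ∀ i, v' i = ∑ j ∈ s, K i j * u' j) :
    ∑ i ∈ s, (G (u' i) - 1 / 2 * u' i * v' i) - ∑ i ∈ s, (G (u i) - 1 / 2 * u i * v i)
      ≤ ∑ i ∈ s, (g (u' i) - v i) * (u' i - u i) := by
  have htangent : ∑ i ∈ s, (G (u' i) - G (u i)) ≤ ∑ i ∈ s, g (u' i) * (u' i - u i) :=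
    sum_le_sum fun i _ => hconv.sub_le_mul_sub_of_hasDerivAt trivial trivial (hderiv _)
  have hquadratic := two_mul_sum_mul_sub_le_of_posSemidef s hsym u u' (hpsd _)
  simp only [← hv, ← hv'] at hquadratic
  simp only [sum_sub_distrib, sub_mul, mul_assoc, ← mul_sum] at htangent hquadratic ⊢
  linarith

end QuadraticForm

/-- fully discrete Scharfetter-Gummel energy dissipation
(generalized Keller-Segel), with no restriction on the time step. -/
theorem fully_discrete_scharfetter_gummel_energy_dissipation
    (I : ℕ) (hI : 1 ≤ I) (Δt Δx : ℝ) (hΔt : 0 < Δt) (hΔx : Δx = 1 / (I : ℝ))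
    (K : ℕ → ℕ → ℝ)
    (hKsym : ∀ i j, K i j = K j i)
    (hKpsd : ∀ w : ℕ → ℝ,
      0 ≤ ∑ i ∈ Finset.Icc 1 I, ∑ j ∈ Finset.Icc 1 I, K i j * w i * w j)
    (G g : ℝ → ℝ)
    (hGconv : ConvexOn ℝ Set.univ G)
    (hG : ∀ x : ℝ, HasDerivAt G (g x) x)
    (un un1 vn vn1 : ℕ → ℝ)
    (hvn : ∀ i, vn i = ∑ j ∈ Finset.Icc 1 I, K i j * un j)
    (hvn1 : ∀ i, vn1 i = ∑ j ∈ Finset.Icc 1 I, K i j * un1 j)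
    (c : ℕ → ℝ) (hc : ∀ i ∈ Finset.Icc 1 (I - 1), 0 ≤ c i)
    (F : ℕ → ℝ) (hF0 : F 0 = 0) (hFI : F I = 0)
    (hF : ∀ i ∈ Finset.Icc 1 (I - 1),
      F i = -(c i / Δx) *
        (Real.exp (g (un1 (i + 1)) - vn (i + 1)) - Real.exp (g (un1 i) - vn i)))
    (hscheme : ∀ i ∈ Finset.Icc 1 I, un1 i - un i + (Δt / Δx) * (F i - F (i - 1)) = 0) :
    Δx * ∑ i ∈ Finset.Icc 1 I, (G (un1 i) - (1 / 2) * un1 i * vn1 i)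
      - Δx * ∑ i ∈ Finset.Icc 1 I, (G (un i) - (1 / 2) * un i * vn i)
      ≤ -(Δt / Δx) * ∑ i ∈ Finset.Icc 1 (I - 1),
          c i * (Real.exp (g (un1 (i + 1)) - vn (i + 1)) - Real.exp (g (un1 i) - vn i))
            * ((g (un1 (i + 1)) - vn (i + 1)) - (g (un1 i) - vn i))
    ∧ -(Δt / Δx) * ∑ i ∈ Finset.Icc 1 (I - 1),
          c i * (Real.exp (g (un1 (i + 1)) - vn (i + 1)) - Real.exp (g (un1 i) - vn i))
            * ((g (un1 (i + 1)) - vn (i + 1)) - (g (un1 i) - vn i)) ≤ 0 := by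
  have hΔx_pos : 0 < Δx := by rw [hΔx]; exact one_div_pos.2 (by exact_mod_cast hI)
  constructor
  · calc _ = Δx * (∑ i ∈ Icc 1 I, (G (un1 i) - 1 / 2 * un1 i * vn1 i)
            - ∑ i ∈ Icc 1 I, (G (un i) - 1 / 2 * un i * vn i)) := (mul_sub _ _ _).symm
      _ ≤ Δx * ∑ i ∈ Icc 1 I, (g (un1 i) - vn i) * (un1 i - un i) :=
        mul_le_mul_of_nonneg_left (sum_energy_sub_le _ hGconv hG hKsym hKpsd hvn hvn1) hΔx_pos.le
      _ = Δx * (-(Δt / Δx) * ∑ i ∈ Icc 1 I, (g (un1 i) - vn i) * (F i - F (i - 1))) := by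
        congr 1
        rw [mul_sum]
        exact sum_congr rfl fun i hi => by linear_combination (g (un1 i) - vn i) * hscheme i hi
      _ = Δt * ∑ i ∈ Icc 1 (I - 1),
            ((g (un1 (i + 1)) - vn (i + 1)) - (g (un1 i) - vn i)) * F i := by
        rw [sum_Icc_mul_sub_by_parts_of_boundary_eq_zero (fun i => g (un1 i) - vn i) F hF0 hFI]
        field_simp
      _ = _ := by
        rw [mul_sum, mul_sum]
        refine sum_congr rfl fun i hi => ?_
        rw [hF i hi]
        field_simp
  · refine mul_nonpos_of_nonpos_of_nonneg (neg_nonpos.2 (div_pos hΔt hΔx_pos).le)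
      (sum_nonneg fun i hi => ?_)
    rw [mul_assoc]
    exact mul_nonneg (hc i hi) (Real.exp_monotone.sub_mul_sub_nonneg _ _)
end

section
/- Monotonicity of the upwinded gradient-flow flux: let Δx > 0, let ψ : [0,∞) → ℝ be nonnegative and nonincreasing, let g : [0,∞) → ℝ be nondecreasing, and let v₁, v₂ ∈ ℝ. Define, for a, b ≥ 0, D(a,b) = (g(b) − v₂) − (g(a) − v₁) and F(a,b) = −(1/Δx) ( a ψ(b) min(D(a,b), 0) + b ψ(a) max(D(a,b), 0) ). Then for each fixed b ≥ 0 the map a ↦ F(a,b) is nondecreasing on [0,∞), and for each fixed a ≥ 0 the map b ↦ F(a,b) is nonincreasing on [0,∞). -/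
/-- monotonicity of the upwinded gradient-flow numerical flux. -/
theorem upwinded_gradient_flow_flux_monotone
    (Δx : ℝ) (hΔx : 0 < Δx)
    (ψ g : ℝ → ℝ)
    (hψnonneg : ∀ x : ℝ, 0 ≤ x → 0 ≤ ψ x)
    (hψanti : ∀ x y : ℝ, 0 ≤ x → x ≤ y → ψ y ≤ ψ x)
    (hgmono : ∀ x y : ℝ, 0 ≤ x → x ≤ y → g x ≤ g y)
    (v₁ v₂ : ℝ)
    (D F : ℝ → ℝ → ℝ)
    (hD : ∀ a b, D a b = (g b - v₂) - (g a - v₁))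
    (hF : ∀ a b, F a b = -(1 / Δx) *
      (a * ψ b * min (D a b) 0 + b * ψ a * max (D a b) 0)) :
    (∀ b : ℝ, 0 ≤ b → MonotoneOn (fun a => F a b) (Set.Ici 0))
    ∧ (∀ a : ℝ, 0 ≤ a → AntitoneOn (fun b => F a b) (Set.Ici 0)) := by
  have hΔ : 0 ≤ 1 / Δx := by positivity
  constructor
  · intro b hb a₁ ha₁ a₂ ha₂ h12
    simp only [Set.mem_Ici] at ha₁ ha₂
    simp only [hF]
    have hψb := hψnonneg b hb
    have hψa1 := hψnonneg a₁ ha₁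
    have hψa2 := hψnonneg a₂ ha₂
    have hψ12 := hψanti a₁ a₂ ha₁ h12
    have hDle : D a₂ b ≤ D a₁ b := by
      rw [hD, hD]; have := hgmono a₁ a₂ ha₁ h12; linarith
    have h1a : a₂ * ψ b * min (D a₂ b) 0 ≤ a₂ * ψ b * min (D a₁ b) 0 :=
      mul_le_mul_of_nonneg_left (min_le_min hDle le_rfl) (by positivity)
    have h1b : a₂ * ψ b * min (D a₁ b) 0 ≤ a₁ * ψ b * min (D a₁ b) 0 :=
      mul_le_mul_of_nonpos_right (mul_le_mul_of_nonneg_right h12 hψb)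
        (min_le_right _ _)
    have h2a : b * ψ a₂ * max (D a₂ b) 0 ≤ b * ψ a₂ * max (D a₁ b) 0 :=
      mul_le_mul_of_nonneg_left (max_le_max hDle le_rfl) (by positivity)
    have h2b : b * ψ a₂ * max (D a₁ b) 0 ≤ b * ψ a₁ * max (D a₁ b) 0 :=
      mul_le_mul_of_nonneg_right (mul_le_mul_of_nonneg_left hψ12 hb)
        (le_max_right _ _)
    have key : a₂ * ψ b * min (D a₂ b) 0 + b * ψ a₂ * max (D a₂ b) 0
        ≤ a₁ * ψ b * min (D a₁ b) 0 + b * ψ a₁ * max (D a₁ b) 0 := by linarith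
    nlinarith [mul_le_mul_of_nonneg_left key hΔ]
  · intro a ha b₁ hb₁ b₂ hb₂ h12
    simp only [Set.mem_Ici] at hb₁ hb₂
    simp only [hF]
    have hψa := hψnonneg a ha
    have hψb1 := hψnonneg b₁ hb₁
    have hψb2 := hψnonneg b₂ hb₂
    have hψ12 := hψanti b₁ b₂ hb₁ h12
    have hDle : D a b₁ ≤ D a b₂ := by
      rw [hD, hD]; have := hgmono b₁ b₂ hb₁ h12; linarith
    have h1a : a * ψ b₂ * min (D a b₁) 0 ≤ a * ψ b₂ * min (D a b₂) 0 :=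
      mul_le_mul_of_nonneg_left (min_le_min hDle le_rfl) (by positivity)
    have h1b : a * ψ b₁ * min (D a b₁) 0 ≤ a * ψ b₂ * min (D a b₁) 0 :=
      mul_le_mul_of_nonpos_right (mul_le_mul_of_nonneg_left hψ12 ha)
        (min_le_right _ _)
    have h2a : b₁ * ψ a * max (D a b₁) 0 ≤ b₁ * ψ a * max (D a b₂) 0 :=
      mul_le_mul_of_nonneg_left (max_le_max hDle le_rfl) (by positivity)
    have h2b : b₁ * ψ a * max (D a b₂) 0 ≤ b₂ * ψ a * max (D a b₂) 0 :=
      mul_le_mul_of_nonneg_right (mul_le_mul_of_nonneg_right h12 hψa)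
        (le_max_right _ _)
    have key : a * ψ b₁ * min (D a b₁) 0 + b₁ * ψ a * max (D a b₁) 0
        ≤ a * ψ b₂ * min (D a b₂) 0 + b₂ * ψ a * max (D a b₂) 0 := by linarith
    nlinarith [mul_le_mul_of_nonneg_left key hΔ]
end

section
/- Monotonicity of the upwind-scheme flux: let Δx > 0, let ψ : [0,∞) → ℝ be nonnegative and nonincreasing, and let v₁, v₂ ∈ ℝ. Define, for a, b ≥ 0, F(a,b) = −(1/Δx) ( b − a − a ψ(b) max(v₂ − v₁, 0) − b ψ(a) min(v₂ − v₁, 0) ). Then for each fixed b ≥ 0 the map a ↦ F(a,b) is nondecreasing on [0,∞), and for each fixed a ≥ 0 the map b ↦ F(a,b) is nonincreasing on [0,∞). -/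
/-- monotonicity of the upwind-scheme numerical flux. -/
theorem upwind_scheme_flux_monotone
    (Δx : ℝ) (hΔx : 0 < Δx)
    (ψ : ℝ → ℝ)
    (hψnonneg : ∀ x : ℝ, 0 ≤ x → 0 ≤ ψ x)
    (hψanti : ∀ x y : ℝ, 0 ≤ x → x ≤ y → ψ y ≤ ψ x)
    (v₁ v₂ : ℝ)
    (F : ℝ → ℝ → ℝ)
    (hF : ∀ a b, F a b = -(1 / Δx) *
      (b - a - a * ψ b * max (v₂ - v₁) 0 - b * ψ a * min (v₂ - v₁) 0)) :
    (∀ b : ℝ, 0 ≤ b → MonotoneOn (fun a => F a b) (Set.Ici 0))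
    ∧ (∀ a : ℝ, 0 ≤ a → AntitoneOn (fun b => F a b) (Set.Ici 0)) := by
  have hM : 0 ≤ max (v₂ - v₁) 0 := le_max_right _ _
  have hm : min (v₂ - v₁) 0 ≤ 0 := min_le_right _ _
  have hΔ : 0 < 1 / Δx := by positivity
  constructor
  · intro b hb x hx y hy hxy
    simp only [Set.mem_Ici] at hx hy
    simp only [hF]
    have h1 := hψanti x y hx hxy
    have h2 := hψnonneg b hb
    have key : (b - y - y * ψ b * max (v₂ - v₁) 0 - b * ψ y * min (v₂ - v₁) 0)
        ≤ (b - x - x * ψ b * max (v₂ - v₁) 0 - b * ψ x * min (v₂ - v₁) 0) := by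
      nlinarith [mul_nonneg hb (neg_nonneg.mpr hm), mul_nonneg (mul_nonneg hy h2) hM,
        mul_nonneg (sub_nonneg.mpr hxy) (mul_nonneg h2 hM),
        mul_le_mul_of_nonneg_left h1 (mul_nonneg hb (neg_nonneg.mpr hm))]
    nlinarith [mul_le_mul_of_nonneg_left key hΔ.le]
  · intro a ha x hx y hy hxy
    simp only [Set.mem_Ici] at hx hy
    simp only [hF]
    have h1 := hψanti x y hx hxy
    have h2 := hψnonneg a ha
    have key : (x - a - a * ψ x * max (v₂ - v₁) 0 - x * ψ a * min (v₂ - v₁) 0)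
        ≤ (y - a - a * ψ y * max (v₂ - v₁) 0 - y * ψ a * min (v₂ - v₁) 0) := by
      nlinarith [mul_le_mul_of_nonneg_left h1 (mul_nonneg ha hM),
        mul_nonneg (sub_nonneg.mpr hxy) (mul_nonneg h2 (neg_nonneg.mpr hm))]
    nlinarith [mul_le_mul_of_nonneg_left key hΔ.le]
end

section
/- Monotone dynamics preserve super- and subsolutions: fix an integer I ≥ 1, flux functions A_i : ℝ × ℝ → ℝ for i = 0,...,I with A_0 ≡ 0 and A_I ≡ 0, each A_i continuously differentiable with ∂₁A_i ≥ 0 and ∂₂A_i ≤ 0 everywhere, and f ∈ ℝ^I. Suppose u = (u_1,...,u_I) : [0,∞) → ℝ^I is continuously differentiable and solves, for all t ≥ 0 and i = 1,...,I, u_i'(t) + u_i(t) + A_i(u_i(t), u_{i+1}(t)) − A_{i−1}(u_{i−1}(t), u_i(t)) = f_i (with the conventions A_0 = A_I = 0 so boundary terms vanish). If u(0) is a supersolution, i.e. u_i(0) + A_i(u_i(0), u_{i+1}(0)) − A_{i−1}(u_{i−1}(0), u_i(0)) ≥ f_i for all i, then each map t ↦ u_i(t) is nonincreasing on [0,∞),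 and in particular u(t) is a supersolution for all t ≥ 0. Symmetrically, if u(0) is a subsolution (the reverse inequalities hold), then each t ↦ u_i(t) is nondecreasing and u(t) remains a subsolution. -/
/-!
Differentiating the equation in time shows that the velocity `v = u'` solves the linearized
system `v' = -(1 + DS(u)) v`. Monotonicity of the fluxes makes its off-diagonal coefficients
nonnegative, i.e. the system is cooperative, so it obeys a maximum principle: the sign of
`v(0) = f - S(u(0))` persists for all time. Hence each `u_i` is monotone, and
`S(u(t)) = f - v(t)` stays on the same side of `f`.
-/

open Set Filter Topology Function

section PartialDerivatives

variable {g : ℝ → ℝ → ℝ}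

theorem deriv_left_eq_fderiv_uncurry {x y : ℝ} (hg : DifferentiableAt ℝ (uncurry g) (x, y)) :
    deriv (fun s ↦ g s y) x = fderiv ℝ (uncurry g) (x, y) (1, 0) := by
  have h := hg.hasFDerivAt.comp_hasDerivAt x ((hasDerivAt_id x).prodMk (hasDerivAt_const x y))
  exact h.deriv

theorem deriv_right_eq_fderiv_uncurry {x y : ℝ} (hg : DifferentiableAt ℝ (uncurry g) (x, y)) :
    deriv (fun s ↦ g x s) y = fderiv ℝ (uncurry g) (x, y) (0, 1) := by
  have h := hg.hasFDerivAt.comp_hasDerivAt y ((hasDerivAt_const y x).prodMk (hasDerivAt_id y))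
  exact h.deriv

theorem HasDerivWithinAt.uncurry_comp (hg : Differentiable ℝ (uncurry g)) {x y : ℝ → ℝ}
    {x' y' t : ℝ} {s : Set ℝ} (hx : HasDerivWithinAt x x' s t) (hy : HasDerivWithinAt y y' s t) :
    HasDerivWithinAt (fun τ ↦ g (x τ) (y τ))
      (deriv (fun σ ↦ g σ (y t)) (x t) * x' + deriv (fun σ ↦ g (x t) σ) (y t) * y') s t := by
  have hxy : ((x', y') : ℝ × ℝ) = x' • ((1 : ℝ), (0 : ℝ)) + y' • ((0 : ℝ), (1 : ℝ)) := by
    simp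
  have h := (hg (x t, y t)).hasFDerivAt.comp_hasDerivWithinAt t (hx.prodMk hy)
  rw [hxy, map_add, map_smul, map_smul, ← deriv_left_eq_fderiv_uncurry (hg _),
    ← deriv_right_eq_fderiv_uncurry (hg _), smul_eq_mul, smul_eq_mul, mul_comm x',
    mul_comm y'] at h
  exact h

theorem continuous_deriv_left_of_contDiff_uncurry (hg : ContDiff ℝ 1 (uncurry g)) :
    Continuous fun p : ℝ × ℝ ↦ deriv (fun s ↦ g s p.2) p.1 := by
  simp_rw [deriv_left_eq_fderiv_uncurry (hg.differentiable one_ne_zero _)]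
  exact (hg.continuous_fderiv one_ne_zero).clm_apply continuous_const

theorem continuous_deriv_right_of_contDiff_uncurry (hg : ContDiff ℝ 1 (uncurry g)) :
    Continuous fun p : ℝ × ℝ ↦ deriv (fun s ↦ g p.1 s) p.2 := by
  simp_rw [deriv_right_eq_fderiv_uncurry (hg.differentiable one_ne_zero _)]
  exact (hg.continuous_fderiv one_ne_zero).clm_apply continuous_const

end PartialDerivatives

theorem frequently_slope_finset_sup'_lt {ι : Type*} {s : Finset ι} (hs : s.Nonempty)
    {v : ι → ℝ → ℝ} {v' : ι → ℝ} {x r : ℝ}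
    (hv : ∀ j ∈ s, HasDerivWithinAt (v j) (v' j) (Ici x) x)
    (hr : ∀ j ∈ s, v j x = s.sup' hs (v · x) → v' j < r) :
    ∃ᶠ z in 𝓝[>] x, slope (fun y ↦ s.sup' hs (v · y)) x z < r := by
  set m : ℝ → ℝ := fun y ↦ s.sup' hs (v · y)
  have hv_cont : ∀ j ∈ s, ContinuousWithinAt (v j) (Ioi x) x := fun j hj ↦
    (hv j hj).continuousWithinAt.mono Ioi_subset_Ici_self
  have hm_cont : ContinuousWithinAt m (Ioi x) x :=
    ContinuousWithinAt.finset_sup'_apply hs hv_cont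
  have h_inactive : ∀ᶠ z in 𝓝[>] x, ∀ j ∈ s, v j x < m x → v j z < m z :=
    (eventually_all_finset s).2 fun j hj ↦ by
      by_cases hlt : v j x < m x
      · exact ((hv_cont j hj).eventually_lt hm_cont hlt).mono fun _ h _ ↦ h
      · exact Eventually.of_forall fun _ h ↦ absurd h hlt
  have h_argmax : ∀ᶠ z in 𝓝[>] x, ∃ j ∈ s, v j x = m x ∧ m z = v j z :=
    h_inactive.mono fun z hz ↦ by
      obtain ⟨j, hj, hjz⟩ := s.exists_mem_eq_sup' hs (v · z)
      refine ⟨j, hj, (Finset.le_sup' (v · x) hj).eq_of_not_lt fun hlt ↦ ?_, hjz⟩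
      exact (hz j hj hlt).ne hjz.symm
  obtain ⟨j, hj, hfreq⟩ := (Finset.frequently_exists s).1 h_argmax.frequently
  obtain ⟨_, hactive, -⟩ := hfreq.exists
  have hslope : ∀ᶠ z in 𝓝[>] x, slope (v j) x z < r :=
    (hv j hj).Ioi_of_Ici.limsup_slope_le' (lt_irrefl x) (hr j hj hactive)
  refine (hfreq.and_eventually hslope).mono fun z ⟨⟨_, hmz⟩, hz⟩ ↦ ?_
  rwa [slope_def_field, hmz, ← hactive, ← slope_def_field]

theorem finset_sup'_nonpos_of_deriv_le {ι : Type*} {s : Finset ι} (hs : s.Nonempty)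
    {v v' : ι → ℝ → ℝ} {a b K : ℝ}
    (hcont : ∀ j ∈ s, ContinuousOn (v j) (Icc a b))
    (hv : ∀ j ∈ s, ∀ x ∈ Ico a b, HasDerivWithinAt (v j) (v' j x) (Ici x) x)
    (hact : ∀ x ∈ Ico a b, ∀ j ∈ s, v j x = s.sup' hs (v · x) → 0 < v j x →
      v' j x ≤ K * v j x)
    (ha : ∀ j ∈ s, v j a ≤ 0) {x : ℝ} (hx : x ∈ Icc a b) : s.sup' hs (v · x) ≤ 0 := by
  set m : ℝ → ℝ := fun y ↦ s.sup' hs (v · y)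
  -- At a point where `m` touches the barrier `B`, the active components grow at rate at most
  -- `K * m < B'`; elsewhere any bound on the right Dini derivative of `m` may serve as `f'`.
  have hfence : ∀ ε > 0, m x ≤ ε * Real.exp ((K + 1) * x) := by
    intro ε hε
    set B : ℝ → ℝ := fun y ↦ ε * Real.exp ((K + 1) * y)
    have hB_pos : ∀ y, 0 < B y := fun y ↦ by positivity
    have hB : ∀ y, HasDerivAt B ((K + 1) * B y) y := fun y ↦ by
      have h := (((hasDerivAt_id y).const_mul (K + 1)).exp).const_mul ε
      simp only [id, mul_one] at h
      exact h.congr_deriv (by ring)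
    refine image_le_of_liminf_slope_right_lt_deriv_boundary
      (f' := fun y ↦ if m y = B y then K * m y else s.sup' hs (v' · y))
      (ContinuousOn.finset_sup'_apply hs hcont) (fun y hy r hr ↦ ?_)
      ((Finset.sup'_le hs _ ha).trans (hB_pos a).le) hB (fun y _ hyB ↦ ?_) hx
    · refine frequently_slope_finset_sup'_lt hs (fun j hj ↦ hv j hj y hy) fun j hj hjy ↦ ?_
      split_ifs at hr with hyB
      · exact (hact y hy j hj hjy (hjy.trans hyB ▸ hB_pos y)).trans_lt (hjy ▸ hr)
      · exact (Finset.le_sup' (v' · y) hj).trans_lt hr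
    · change m y = B y at hyB
      rw [if_pos hyB, hyB]
      linarith [hB_pos y]
  refine le_of_forall_gt_imp_ge_of_dense fun c hc ↦ ?_
  have hexp := Real.exp_pos ((K + 1) * x)
  simpa only [div_mul_cancel₀ c hexp.ne'] using
    hfence (c / Real.exp ((K + 1) * x)) (by positivity)

theorem tridiagonal_nonpos {I : ℕ} {v α β γ : ℕ → ℝ → ℝ} {a : ℝ}
    (hv : ∀ j ∈ Finset.Icc 1 I, ∀ x, a ≤ x → HasDerivWithinAt (v j)
      (α j x * v j x + β j x * v (j + 1) x + γ j x * v (j - 1) x) (Ici a) x)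
    (hβ : ∀ j x, 0 ≤ β j x) (hγ : ∀ j x, 0 ≤ γ j x)
    (hβI : ∀ x, β I x = 0) (hγ1 : ∀ x, γ 1 x = 0)
    (hcoef : ∀ j ∈ Finset.Icc 1 I, ContinuousOn (fun x ↦ α j x + β j x + γ j x) (Ici a))
    (ha : ∀ j ∈ Finset.Icc 1 I, v j a ≤ 0) :
    ∀ x, a ≤ x → ∀ j ∈ Finset.Icc 1 I, v j x ≤ 0 := by
  intro b hab i hi
  set s := Finset.Icc 1 I
  have hs : s.Nonempty := ⟨i, hi⟩
  obtain ⟨K, hK⟩ := isCompact_Icc.bddAbove_image <|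
    (ContinuousOn.finset_sup'_apply hs hcoef).mono (Icc_subset_Ici_self : Icc a b ⊆ Ici a)
  have hact : ∀ x ∈ Ico a b, ∀ j ∈ s, v j x = s.sup' hs (v · x) → 0 < v j x →
      α j x * v j x + β j x * v (j + 1) x + γ j x * v (j - 1) x ≤ K * v j x := by
    intro x hx j hj hmax hpos
    have hj' := Finset.mem_Icc.1 hj
    have hupper : β j x * v (j + 1) x ≤ β j x * v j x := by
      rcases hj'.2.lt_or_eq with hlt | rfl
      · refine mul_le_mul_of_nonneg_left ((Finset.le_sup' (v · x) ?_).trans hmax.ge) (hβ j x)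
        exact Finset.mem_Icc.2 ⟨by omega, hlt⟩
      · simp [hβI]
    have hlower : γ j x * v (j - 1) x ≤ γ j x * v j x := by
      rcases hj'.1.lt_or_eq with hlt | rfl
      · refine mul_le_mul_of_nonneg_left ((Finset.le_sup' (v · x) ?_).trans hmax.ge) (hγ j x)
        exact Finset.mem_Icc.2 ⟨by omega, by omega⟩
      · simp [hγ1]
    have hsum : α j x + β j x + γ j x ≤ K :=
      (Finset.le_sup' (fun k ↦ α k x + β k x + γ k x) hj).trans
        (hK ⟨x, Ico_subset_Icc_self hx, rfl⟩)
    calc α j x * v j x + β j x * v (j + 1) x + γ j x * v (j - 1) x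
        ≤ (α j x + β j x + γ j x) * v j x := by linarith
      _ ≤ K * v j x := mul_le_mul_of_nonneg_right hsum hpos.le
  refine (Finset.le_sup' (v · b) hi).trans <| finset_sup'_nonpos_of_deriv_le hs
    (fun j hj x hx ↦ (hv j hj x hx.1).continuousWithinAt.mono Icc_subset_Ici_self)
    (fun j hj x hx ↦ (hv j hj x hx.1).mono (Ici_subset_Ici.2 hx.1)) hact ha ⟨hab, le_rfl⟩

theorem tridiagonal_nonneg {I : ℕ} {v α β γ : ℕ → ℝ → ℝ} {a : ℝ}
    (hv : ∀ j ∈ Finset.Icc 1 I, ∀ x, a ≤ x → HasDerivWithinAt (v j)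
      (α j x * v j x + β j x * v (j + 1) x + γ j x * v (j - 1) x) (Ici a) x)
    (hβ : ∀ j x, 0 ≤ β j x) (hγ : ∀ j x, 0 ≤ γ j x)
    (hβI : ∀ x, β I x = 0) (hγ1 : ∀ x, γ 1 x = 0)
    (hcoef : ∀ j ∈ Finset.Icc 1 I, ContinuousOn (fun x ↦ α j x + β j x + γ j x) (Ici a))
    (ha : ∀ j ∈ Finset.Icc 1 I, 0 ≤ v j a) :
    ∀ x, a ≤ x → ∀ j ∈ Finset.Icc 1 I, 0 ≤ v j x := by
  intro x hx j hj
  have hneg := tridiagonal_nonpos (v := fun j x ↦ -v j x)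
    (fun j hj x hx ↦ (hv j hj x hx).neg.congr_deriv (by ring)) hβ hγ hβI hγ1 hcoef
    (fun j hj ↦ neg_nonpos.2 (ha j hj)) x hx j hj
  exact neg_nonpos.1 hneg

theorem antitoneOn_Ici_of_hasDerivWithinAt_nonpos {g g' : ℝ → ℝ} {a : ℝ}
    (hg : ∀ t, a ≤ t → HasDerivWithinAt g (g' t) (Ici a) t) (hg' : ∀ t, a ≤ t → g' t ≤ 0) :
    AntitoneOn g (Ici a) :=
  antitoneOn_of_hasDerivWithinAt_nonpos (convex_Ici a)
    (fun t ht ↦ (hg t ht).continuousWithinAt)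
    (fun t ht ↦ by
      rw [interior_Ici] at ht ⊢
      exact (hg t ht.le).mono Ioi_subset_Ici_self)
    (fun t ht ↦ hg' t (interior_subset ht))

theorem monotoneOn_Ici_of_hasDerivWithinAt_nonneg {g g' : ℝ → ℝ} {a : ℝ}
    (hg : ∀ t, a ≤ t → HasDerivWithinAt g (g' t) (Ici a) t) (hg' : ∀ t, a ≤ t → 0 ≤ g' t) :
    MonotoneOn g (Ici a) :=
  monotoneOn_of_hasDerivWithinAt_nonneg (convex_Ici a)
    (fun t ht ↦ (hg t ht).continuousWithinAt)
    (fun t ht ↦ by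
      rw [interior_Ici] at ht ⊢
      exact (hg t ht.le).mono Ioi_subset_Ici_self)
    (fun t ht ↦ hg' t (interior_subset ht))

/- The entries of row `i` of `-(1 + DS(u(t)))`, the matrix of the linear system solved by `u'`. -/
noncomputable def linearizedDiag (A : ℕ → ℝ → ℝ → ℝ) (u : ℕ → ℝ → ℝ) (i : ℕ) (t : ℝ) : ℝ :=
  -1 - deriv (fun s ↦ A i s (u (i + 1) t)) (u i t)
    + deriv (fun s ↦ A (i - 1) (u (i - 1) t) s) (u i t)

noncomputable def linearizedUpper (A : ℕ → ℝ → ℝ → ℝ) (u : ℕ → ℝ → ℝ) (i : ℕ) (t : ℝ) : ℝ :=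
  -deriv (fun s ↦ A i (u i t) s) (u (i + 1) t)

noncomputable def linearizedLower (A : ℕ → ℝ → ℝ → ℝ) (u : ℕ → ℝ → ℝ) (i : ℕ) (t : ℝ) : ℝ :=
  deriv (fun s ↦ A (i - 1) s (u i t)) (u (i - 1) t)

section Linearization

variable {A : ℕ → ℝ → ℝ → ℝ} {u : ℕ → ℝ → ℝ}

theorem linearizedUpper_nonneg (hA : ∀ i (x y : ℝ), deriv (fun s ↦ A i x s) y ≤ 0)
    (i : ℕ) (t : ℝ) : 0 ≤ linearizedUpper A u i t :=
  neg_nonneg.2 (hA _ _ _)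

theorem linearizedLower_nonneg (hA : ∀ i (x y : ℝ), 0 ≤ deriv (fun s ↦ A i s y) x)
    (i : ℕ) (t : ℝ) : 0 ≤ linearizedLower A u i t :=
  hA _ _ _

theorem linearizedUpper_eq_zero {i : ℕ} (hA : ∀ x y : ℝ, A i x y = 0) (t : ℝ) :
    linearizedUpper A u i t = 0 := by
  simp [linearizedUpper, hA]

theorem linearizedLower_eq_zero {i : ℕ} (hA : ∀ x y : ℝ, A (i - 1) x y = 0) (t : ℝ) :
    linearizedLower A u i t = 0 := by
  simp [linearizedLower, hA]

theorem continuousOn_linearized {s : Set ℝ} (hA : ∀ i, ContDiff ℝ 1 (uncurry (A i)))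
    (hu : ∀ i, ContinuousOn (u i) s) (i : ℕ) :
    ContinuousOn (fun t ↦ linearizedDiag A u i t + linearizedUpper A u i t
      + linearizedLower A u i t) s := by
  have hpair : ∀ j k, ContinuousOn (fun t ↦ (u j t, u k t)) s := fun j k ↦ (hu j).prodMk (hu k)
  have h₁ := continuous_deriv_left_of_contDiff_uncurry (hA i)
  have h₂ := continuous_deriv_right_of_contDiff_uncurry (hA (i - 1))
  have h₃ := continuous_deriv_right_of_contDiff_uncurry (hA i)
  have h₄ := continuous_deriv_left_of_contDiff_uncurry (hA (i - 1))
  unfold linearizedDiag linearizedUpper linearizedLower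
  exact (((continuousOn_const.sub (h₁.comp_continuousOn (hpair i (i + 1)))).add
    (h₂.comp_continuousOn (hpair (i - 1) i))).add
    (h₃.comp_continuousOn (hpair i (i + 1))).neg).add (h₄.comp_continuousOn (hpair (i - 1) i))

end Linearization

theorem hasDerivWithinAt_velocity {I : ℕ} {A : ℕ → ℝ → ℝ → ℝ} {f : ℕ → ℝ}
    {u u' : ℕ → ℝ → ℝ} (hA : ∀ i, ContDiff ℝ 1 (uncurry (A i)))
    (hu : ∀ i, ∀ t : ℝ, 0 ≤ t → HasDerivWithinAt (u i) (u' i t) (Ici 0) t)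
    (hode : ∀ i ∈ Finset.Icc 1 I, ∀ t : ℝ, 0 ≤ t →
      u' i t + u i t + A i (u i t) (u (i + 1) t) - A (i - 1) (u (i - 1) t) (u i t) = f i)
    (i : ℕ) (hi : i ∈ Finset.Icc 1 I) (t : ℝ) (ht : 0 ≤ t) :
    HasDerivWithinAt (u' i) (linearizedDiag A u i t * u' i t
      + linearizedUpper A u i t * u' (i + 1) t + linearizedLower A u i t * u' (i - 1) t)
      (Ici 0) t := by
  have hdiff : ∀ j, Differentiable ℝ (uncurry (A j)) := fun j ↦ (hA j).differentiable one_ne_zero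
  have hrhs := (((hasDerivWithinAt_const t (Ici 0) (f i)).sub (hu i t ht)).sub
    ((hu i t ht).uncurry_comp (hdiff i) (hu (i + 1) t ht))).add
    ((hu (i - 1) t ht).uncurry_comp (hdiff (i - 1)) (hu i t ht))
  refine (hrhs.congr_of_mem (fun τ hτ ↦ ?_) ht).congr_deriv ?_
  · simp only [Pi.add_apply, Pi.sub_apply]
    linarith [hode i hi τ hτ]
  · unfold linearizedDiag linearizedUpper linearizedLower
    ring

theorem monotone_dynamics_preserves_super_and_subsolutions_general
    (I : ℕ)
    (A : ℕ → ℝ → ℝ → ℝ) (f : ℕ → ℝ)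
    (hA0 : ∀ x y : ℝ, A 0 x y = 0) (hAI : ∀ x y : ℝ, A I x y = 0)
    (hAC1 : ∀ i, ContDiff ℝ 1 (fun p : ℝ × ℝ => A i p.1 p.2))
    (hA1 : ∀ i (x y : ℝ), 0 ≤ deriv (fun s => A i s y) x)
    (hA2 : ∀ i (x y : ℝ), deriv (fun s => A i x s) y ≤ 0)
    (u u' : ℕ → ℝ → ℝ)
    (hu : ∀ i, ∀ t : ℝ, 0 ≤ t → HasDerivWithinAt (u i) (u' i t) (Set.Ici 0) t)
    (hode : ∀ i ∈ Finset.Icc 1 I, ∀ t : ℝ, 0 ≤ t →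
      u' i t + u i t + A i (u i t) (u (i + 1) t) - A (i - 1) (u (i - 1) t) (u i t)
        = f i) :
    ((∀ i ∈ Finset.Icc 1 I,
        u i 0 + A i (u i 0) (u (i + 1) 0) - A (i - 1) (u (i - 1) 0) (u i 0) ≥ f i) →
      (∀ i ∈ Finset.Icc 1 I, AntitoneOn (u i) (Set.Ici 0))
      ∧ (∀ t : ℝ, 0 ≤ t → ∀ i ∈ Finset.Icc 1 I,
          u i t + A i (u i t) (u (i + 1) t) - A (i - 1) (u (i - 1) t) (u i t) ≥ f i))
    ∧ ((∀ i ∈ Finset.Icc 1 I,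
        u i 0 + A i (u i 0) (u (i + 1) 0) - A (i - 1) (u (i - 1) 0) (u i 0) ≤ f i) →
      (∀ i ∈ Finset.Icc 1 I, MonotoneOn (u i) (Set.Ici 0))
      ∧ (∀ t : ℝ, 0 ≤ t → ∀ i ∈ Finset.Icc 1 I,
          u i t + A i (u i t) (u (i + 1) t) - A (i - 1) (u (i - 1) t) (u i t) ≤ f i)) := by
  have hvel := hasDerivWithinAt_velocity hAC1 hu hode
  have hβ := linearizedUpper_nonneg (u := u) hA2
  have hγ := linearizedLower_nonneg (u := u) hA1
  have hβI := linearizedUpper_eq_zero (u := u) hAI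
  have hγ1 := linearizedLower_eq_zero (u := u) (i := 1) hA0
  have hcoef : ∀ i ∈ Finset.Icc 1 I, ContinuousOn (fun t ↦ linearizedDiag A u i t
      + linearizedUpper A u i t + linearizedLower A u i t) (Ici 0) := fun i _ ↦
    continuousOn_linearized hAC1 (fun j t ht ↦ (hu j t ht).continuousWithinAt) i
  refine ⟨fun hsup ↦ ?_, fun hsub ↦ ?_⟩
  · have hneg := tridiagonal_nonpos hvel hβ hγ hβI hγ1 hcoef
      fun i hi ↦ by linarith [hsup i hi, hode i hi 0 le_rfl]
    exact ⟨fun i hi ↦ antitoneOn_Ici_of_hasDerivWithinAt_nonpos (hu i)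
        fun t ht ↦ hneg t ht i hi,
      fun t ht i hi ↦ by linarith [hneg t ht i hi, hode i hi t ht]⟩
  · have hpos := tridiagonal_nonneg hvel hβ hγ hβI hγ1 hcoef
      fun i hi ↦ by linarith [hsub i hi, hode i hi 0 le_rfl]
    exact ⟨fun i hi ↦ monotoneOn_Ici_of_hasDerivWithinAt_nonneg (hu i)
        fun t ht ↦ hpos t ht i hi,
      fun t ht i hi ↦ by linarith [hpos t ht i hi, hode i hi t ht]⟩

/-- the monotone dynamics `du/dt + S(u) = f` preserve super- and
subsolutions, and the solution started from a supersolution (resp. subsolution)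
is componentwise nonincreasing (resp. nondecreasing) in time. -/
theorem monotone_dynamics_preserves_super_and_subsolutions
    (I : ℕ) (hI : 1 ≤ I)
    (A : ℕ → ℝ → ℝ → ℝ) (f : ℕ → ℝ)
    (hA0 : ∀ x y : ℝ, A 0 x y = 0) (hAI : ∀ x y : ℝ, A I x y = 0)
    (hAC1 : ∀ i, ContDiff ℝ 1 (fun p : ℝ × ℝ => A i p.1 p.2))
    (hA1 : ∀ i (x y : ℝ), 0 ≤ deriv (fun s => A i s y) x)
    (hA2 : ∀ i (x y : ℝ), deriv (fun s => A i x s) y ≤ 0)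
    (u u' : ℕ → ℝ → ℝ)
    (hu : ∀ i, ∀ t : ℝ, 0 ≤ t → HasDerivWithinAt (u i) (u' i t) (Set.Ici 0) t)
    (hu' : ∀ i, ContinuousOn (u' i) (Set.Ici 0))
    (hode : ∀ i ∈ Finset.Icc 1 I, ∀ t : ℝ, 0 ≤ t →
      u' i t + u i t + A i (u i t) (u (i + 1) t) - A (i - 1) (u (i - 1) t) (u i t)
        = f i) :
    ((∀ i ∈ Finset.Icc 1 I,
        u i 0 + A i (u i 0) (u (i + 1) 0) - A (i - 1) (u (i - 1) 0) (u i 0) ≥ f i) →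
      (∀ i ∈ Finset.Icc 1 I, AntitoneOn (u i) (Set.Ici 0))
      ∧ (∀ t : ℝ, 0 ≤ t → ∀ i ∈ Finset.Icc 1 I,
          u i t + A i (u i t) (u (i + 1) t) - A (i - 1) (u (i - 1) t) (u i t) ≥ f i))
    ∧ ((∀ i ∈ Finset.Icc 1 I,
        u i 0 + A i (u i 0) (u (i + 1) 0) - A (i - 1) (u (i - 1) 0) (u i 0) ≤ f i) →
      (∀ i ∈ Finset.Icc 1 I, MonotoneOn (u i) (Set.Ici 0))
      ∧ (∀ t : ℝ, 0 ≤ t → ∀ i ∈ Finset.Icc 1 I,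
          u i t + A i (u i t) (u (i + 1) t) - A (i - 1) (u (i - 1) t) (u i t) ≤ f i)) :=
  monotone_dynamics_preserves_super_and_subsolutions_general I A f hA0 hAI hAC1 hA1 hA2 u u' hu hode
end

section
/- Comparison principle for monotone schemes: fix an integer I ≥ 1, flux functions A_i : ℝ × ℝ → ℝ for i = 0,...,I with A_0 ≡ 0 and A_I ≡ 0, such that each A_i is nondecreasing in its first argument and nonincreasing in its second argument, and f ∈ ℝ^I. If ū ∈ ℝ^I is a supersolution, i.e. ū_i + A_i(ū_i, ū_{i+1}) − A_{i−1}(ū_{i−1}, ū_i) ≥ f_i for i = 1,...,I, and u̲ ∈ ℝ^I is a subsolution, i.e. u̲_i + A_i(u̲_i, u̲_{i+1}) − A_{i−1}(u̲_{i−1}, u̲_i) ≤ f_i for i = 1,...,I, then u̲_i ≤ ū_i for every i = 1,...,I. -/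
lemma sum_telescope_Icc (B : ℕ → ℝ) (p q : ℕ) (hp : 1 ≤ p) (hpq : p ≤ q) :
    ∑ i ∈ Finset.Icc p q, (B i - B (i - 1)) = B q - B (p - 1) := by
  induction q with
  | zero => omega
  | succ n ih =>
    rcases Nat.lt_or_ge p (n + 1) with h | h
    · rw [Finset.sum_Icc_succ_top (by omega : p ≤ n + 1), ih (by omega)]
      simp
    · have hpn : p = n + 1 := le_antisymm hpq h
      subst hpn
      simp

/-- comparison principle for monotone schemes -- a subsolution is
smaller than a supersolution. -/
theorem monotone_scheme_comparison_principle
    (I : ℕ) (hI : 1 ≤ I)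
    (A : ℕ → ℝ → ℝ → ℝ) (f : ℕ → ℝ)
    (hA0 : ∀ x y : ℝ, A 0 x y = 0) (hAI : ∀ x y : ℝ, A I x y = 0)
    (hA1 : ∀ i (y : ℝ), Monotone (fun x => A i x y))
    (hA2 : ∀ i (x : ℝ), Antitone (fun y => A i x y))
    (usup usub : ℕ → ℝ)
    (hsuper : ∀ i ∈ Finset.Icc 1 I,
      usup i + A i (usup i) (usup (i + 1)) - A (i - 1) (usup (i - 1)) (usup i) ≥ f i)
    (hsub : ∀ i ∈ Finset.Icc 1 I,
      usub i + A i (usub i) (usub (i + 1)) - A (i - 1) (usub (i - 1)) (usub i) ≤ f i) :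
    ∀ i ∈ Finset.Icc 1 I, usub i ≤ usup i := by
  by_contra hcon
  push_neg at hcon
  obtain ⟨i0, hi0mem, hi0⟩ := hcon
  -- the set of "bad" indices
  set S : Finset ℕ := (Finset.Icc 1 I).filter (fun i => usup i < usub i) with hS
  have hi0S : i0 ∈ S := Finset.mem_filter.mpr ⟨hi0mem, hi0⟩
  have hSne : S.Nonempty := ⟨i0, hi0S⟩
  -- q : the maximal bad index
  set q : ℕ := S.max' hSne with hq
  have hqS : q ∈ S := S.max'_mem hSne
  have hqmax : ∀ j ∈ S, j ≤ q := fun j hj => S.le_max' j hj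
  obtain ⟨hq1, hqI, hqbad⟩ : 1 ≤ q ∧ q ≤ I ∧ usup q < usub q := by
    have h := Finset.mem_filter.mp hqS
    have h2 := Finset.mem_Icc.mp h.1
    exact ⟨h2.1, h2.2, h.2⟩
  -- T : possible left endpoints of a bad interval ending at q
  set T : Finset ℕ := (Finset.Icc 1 q).filter (fun p => ∀ j ∈ Finset.Icc p q, j ∈ S) with hT
  have hqT : q ∈ T := by
    refine Finset.mem_filter.mpr ⟨Finset.mem_Icc.mpr ⟨hq1, le_refl q⟩, ?_⟩
    intro j hj
    have hj2 := Finset.mem_Icc.mp hj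
    have : j = q := le_antisymm hj2.2 hj2.1
    subst this; exact hqS
  have hTne : T.Nonempty := ⟨q, hqT⟩
  set p : ℕ := T.min' hTne with hp
  have hpT : p ∈ T := T.min'_mem hTne
  obtain ⟨hp1, hpq, hpall⟩ : 1 ≤ p ∧ p ≤ q ∧ ∀ j ∈ Finset.Icc p q, j ∈ S := by
    have h := Finset.mem_filter.mp hpT
    have h2 := Finset.mem_Icc.mp h.1
    exact ⟨h2.1, h2.2, h.2⟩
  have hpS : p ∈ S := hpall p (Finset.mem_Icc.mpr ⟨le_refl p, hpq⟩)
  obtain ⟨hp1', hpI, hpbad⟩ : 1 ≤ p ∧ p ≤ I ∧ usup p < usub p := by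
    have h := Finset.mem_filter.mp hpS
    have h2 := Finset.mem_Icc.mp h.1
    exact ⟨h2.1, h2.2, h.2⟩
  -- B : flux differences
  set B : ℕ → ℝ := fun j => A j (usup j) (usup (j + 1)) - A j (usub j) (usub (j + 1)) with hB
  -- key pointwise inequality
  have hkey : ∀ i ∈ Finset.Icc p q, usub i - usup i ≤ B i - B (i - 1) := by
    intro i hi
    have hiI : i ∈ Finset.Icc 1 I := by
      simp only [Finset.mem_Icc] at hi ⊢; omega
    have h1 := hsuper i hiI
    have h2 := hsub i hiI
    have hi1 : i - 1 + 1 = i := by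
      simp only [Finset.mem_Icc] at hi; omega
    simp only [hB, hi1]
    linarith
  -- B q ≤ 0
  have hBq : B q ≤ 0 := by
    rcases Nat.lt_or_ge q I with h | h
    · -- q < I, so q+1 ∈ Icc 1 I and q+1 ∉ S (by maximality)
      have hq1S : q + 1 ∉ S := fun hmem => by have := hqmax _ hmem; omega
      have hq1good : usub (q + 1) ≤ usup (q + 1) := by
        by_contra hh
        push_neg at hh
        exact hq1S (Finset.mem_filter.mpr ⟨Finset.mem_Icc.mpr ⟨by omega, by omega⟩, hh⟩)
      have h1 : A q (usup q) (usup (q + 1)) ≤ A q (usub q) (usup (q + 1)) :=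
        hA1 q (usup (q + 1)) hqbad.le
      have h2 : A q (usub q) (usup (q + 1)) ≤ A q (usub q) (usub (q + 1)) :=
        hA2 q (usub q) hq1good
      simp only [hB]; linarith
    · have hqIeq : q = I := le_antisymm hqI h
      simp [hB, hqIeq, hAI]
  -- B (p-1) ≥ 0
  have hBp : 0 ≤ B (p - 1) := by
    rcases Nat.lt_or_ge 1 p with h | h
    · -- p ≥ 2, so p-1 ∉ S (by minimality of p in T) but p-1 ∈ Icc 1 I
      have hp1S : p - 1 ∉ S := by
        intro hmem
        have hmemT : p - 1 ∈ T := by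
          refine Finset.mem_filter.mpr ⟨Finset.mem_Icc.mpr ⟨by omega, by omega⟩, ?_⟩
          intro j hj
          have hj2 := Finset.mem_Icc.mp hj
          rcases Nat.lt_or_ge j p with hjl | hjl
          · have : j = p - 1 := by omega
            subst this; exact hmem
          · exact hpall j (Finset.mem_Icc.mpr ⟨hjl, hj2.2⟩)
        have := T.min'_le _ hmemT
        omega
      have hp1good : usub (p - 1) ≤ usup (p - 1) := by
        by_contra hh
        push_neg at hh
        exact hp1S (Finset.mem_filter.mpr ⟨Finset.mem_Icc.mpr ⟨by omega, by omega⟩, hh⟩)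
      have hi1 : p - 1 + 1 = p := by omega
      have h1 : A (p - 1) (usub (p - 1)) (usub p) ≤ A (p - 1) (usup (p - 1)) (usub p) :=
        hA1 (p - 1) (usub p) hp1good
      have h2 : A (p - 1) (usup (p - 1)) (usub p) ≤ A (p - 1) (usup (p - 1)) (usup p) :=
        hA2 (p - 1) (usup (p - 1)) hpbad.le
      simp only [hB, hi1]; linarith
    · have : p = 1 := by omega
      simp [hB, this, hA0]
  -- telescoping sum
  have hsum : ∑ i ∈ Finset.Icc p q, (usub i - usup i) ≤ B q - B (p - 1) := by
    calc ∑ i ∈ Finset.Icc p q, (usub i - usup i)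
        ≤ ∑ i ∈ Finset.Icc p q, (B i - B (i - 1)) := Finset.sum_le_sum hkey
      _ = B q - B (p - 1) := sum_telescope_Icc B p q hp1 hpq
  have hpos : 0 < ∑ i ∈ Finset.Icc p q, (usub i - usup i) := by
    apply Finset.sum_pos
    · intro i hi
      have h := Finset.mem_filter.mp (hpall i hi)
      linarith [h.2]
    · exact ⟨p, Finset.mem_Icc.mpr ⟨le_refl p, hpq⟩⟩
  linarith
end

section
/- Uniqueness for monotone schemes: fix an integer I ≥ 1, flux functions A_i : ℝ × ℝ → ℝ for i = 0,...,I with A_0 ≡ 0 and A_I ≡ 0, such that each A_i is nondecreasing in its first argument and nonincreasing in its second argument, and f ∈ ℝ^I. If u, w ∈ ℝ^I both satisfy u_i + A_i(u_i, u_{i+1}) − A_{i−1}(u_{i−1}, u_i) = f_i and w_i + A_i(w_i, w_{i+1}) − A_{i−1}(w_{i−1}, w_i) = f_i for all i = 1,...,I, then u_i = w_i for every i = 1,...,I. -/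
private lemma scheme_le
    (I : ℕ)
    (A : ℕ → ℝ → ℝ → ℝ) (f : ℕ → ℝ)
    (hA0 : ∀ x y : ℝ, A 0 x y = 0) (hAI : ∀ x y : ℝ, A I x y = 0)
    (hA1 : ∀ i (y : ℝ), Monotone (fun x => A i x y))
    (hA2 : ∀ i (x : ℝ), Antitone (fun y => A i x y))
    (u w : ℕ → ℝ)
    (husol : ∀ i ∈ Finset.Icc 1 I,
      u i + A i (u i) (u (i + 1)) - A (i - 1) (u (i - 1)) (u i) = f i)
    (hwsol : ∀ i ∈ Finset.Icc 1 I,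
      w i + A i (w i) (w (i + 1)) - A (i - 1) (w (i - 1)) (w i) = f i) :
    ∀ i ∈ Finset.Icc 1 I, u i ≤ w i := by
  by_contra h
  push_neg at h
  obtain ⟨j0, hj0, hj0'⟩ := h
  set D : ℕ → ℝ := fun k => A k (u k) (u (k+1)) - A k (w k) (w (k+1)) with hD
  have heq : ∀ i ∈ Finset.Icc 1 I,
      (u i - w i) + D i - D (i - 1) = 0 := by
    intro i hi
    have h1 := husol i hi
    have h2 := hwsol i hi
    have hi1 : 1 ≤ i := (Finset.mem_Icc.mp hi).1
    have hs : i - 1 + 1 = i := Nat.succ_pred_eq_of_pos hi1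
    simp only [hD, hs]
    linarith
  have key : ∀ n j, j ∈ Finset.Icc 1 I → I - j ≤ n → w j < u j → 0 ≤ D j := by
    intro n
    induction n with
    | zero =>
      intro j hj hle _
      have hjI : j = I := by
        have := (Finset.mem_Icc.mp hj).2; omega
      subst hjI; simp [hD, hAI]
    | succ n ih =>
      intro j hj hle hwu
      rcases eq_or_lt_of_le (Finset.mem_Icc.mp hj).2 with hjI | hjI
      · subst hjI; simp [hD, hAI]
      · have hj1 : j + 1 ∈ Finset.Icc 1 I := by
          simp only [Finset.mem_Icc]; omega
        rcases le_or_gt (u (j+1)) (w (j+1)) with hle1 | hlt1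
        · have h1 : A j (w j) (u (j+1)) ≤ A j (u j) (u (j+1)) :=
            hA1 j _ hwu.le
          have h2 : A j (w j) (w (j+1)) ≤ A j (w j) (u (j+1)) :=
            hA2 j _ hle1
          simp only [hD]; linarith
        · have hDj1 := ih (j+1) hj1 (by omega) hlt1
          have he := heq (j+1) hj1
          have hs : (j+1) - 1 = j := by omega
          rw [hs] at he
          linarith
  set S := (Finset.Icc 1 I).filter (fun i => w i < u i) with hS
  have hSne : S.Nonempty := ⟨j0, by simp [hS, Finset.mem_filter, hj0, hj0']⟩
  set j := S.min' hSne with hj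
  have hjS : j ∈ S := S.min'_mem hSne
  have hjIcc : j ∈ Finset.Icc 1 I := (Finset.mem_filter.mp hjS).1
  have hwuj : w j < u j := (Finset.mem_filter.mp hjS).2
  have hDj : 0 ≤ D j := key (I - j) j hjIcc le_rfl hwuj
  have he := heq j hjIcc
  have hpos : 0 < D (j - 1) := by linarith
  have hj1 : 1 ≤ j := (Finset.mem_Icc.mp hjIcc).1
  rcases eq_or_lt_of_le hj1 with h1 | h1
  · have hz : D (j-1) = 0 := by
      rw [← h1]
      simp [hD, hA0]
    linarith
  · have hjm : j - 1 ∈ Finset.Icc 1 I := by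
      simp only [Finset.mem_Icc] at hjIcc ⊢; omega
    have hnot : ¬ (w (j-1) < u (j-1)) := by
      intro hc
      have : j ≤ j - 1 := S.min'_le _ (Finset.mem_filter.mpr ⟨hjm, hc⟩)
      omega
    push_neg at hnot
    have hsucc : j - 1 + 1 = j := by omega
    have ha : A (j-1) (u (j-1)) (u j) ≤ A (j-1) (w (j-1)) (u j) :=
      hA1 _ _ hnot
    have hb : A (j-1) (w (j-1)) (u j) ≤ A (j-1) (w (j-1)) (w j) :=
      hA2 _ _ hwuj.le
    have hle0 : D (j-1) ≤ 0 := by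
      simp only [hD, hsucc]; linarith
    linarith

/-- uniqueness of solutions for monotone schemes. -/
theorem monotone_scheme_uniqueness
    (I : ℕ) (hI : 1 ≤ I)
    (A : ℕ → ℝ → ℝ → ℝ) (f : ℕ → ℝ)
    (hA0 : ∀ x y : ℝ, A 0 x y = 0) (hAI : ∀ x y : ℝ, A I x y = 0)
    (hA1 : ∀ i (y : ℝ), Monotone (fun x => A i x y))
    (hA2 : ∀ i (x : ℝ), Antitone (fun y => A i x y))
    (u w : ℕ → ℝ)
    (husol : ∀ i ∈ Finset.Icc 1 I,
      u i + A i (u i) (u (i + 1)) - A (i - 1) (u (i - 1)) (u i) = f i)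
    (hwsol : ∀ i ∈ Finset.Icc 1 I,
      w i + A i (w i) (w (i + 1)) - A (i - 1) (w (i - 1)) (w i) = f i) :
    ∀ i ∈ Finset.Icc 1 I, u i = w i := by
  intro i hi
  exact le_antisymm
    (scheme_le I A f hA0 hAI hA1 hA2 u w husol hwsol i hi)
    (scheme_le I A f hA0 hAI hA1 hA2 w u hwsol husol i hi)
end

section
/- Existence for monotone schemes: fix an integer I ≥ 1, flux functions A_i : ℝ × ℝ → ℝ for i = 0,...,I with A_0 ≡ 0 and A_I ≡ 0, each A_i Lipschitz continuous, nondecreasing in its first argument and nonincreasing in its second argument, and f ∈ ℝ^I. If there exist a subsolution u̲ ∈ ℝ^I (u̲_i + A_i(u̲_i, u̲_{i+1}) − A_{i−1}(u̲_{i−1}, u̲_i) ≤ f_i for all i) and a supersolution ū ∈ ℝ^I (ū_i + A_i(ū_i, ū_{i+1}) − A_{i−1}(ū_{i−1}, ū_i) ≥ f_i for all i), then there exists u ∈ ℝ^I with u_i + A_i(u_i, u_{i+1}) − A_{i−1}(u_{i−1}, u_i) = f_i and u̲_i ≤ u_i ≤ ū_i for every i = 1,...,I. -/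
lemma telescope_aux (g : ℕ → ℝ) (a b : ℕ) (hab : a ≤ b) :
    ∑ i ∈ Finset.Icc a b, (g i - g (i-1)) = g b - g (a-1) := by
  induction b, hab using Nat.le_induction with
  | base => simp
  | succ b hb ih => rw [Finset.sum_Icc_succ_top (by omega), ih]; simp

lemma scheme_comparison (I : ℕ) (A : ℕ → ℝ → ℝ → ℝ) (f usub usup : ℕ → ℝ)
    (hA0 : ∀ x y : ℝ, A 0 x y = 0) (hAI : ∀ x y : ℝ, A I x y = 0)
    (hA1 : ∀ i (y : ℝ), Monotone (fun x => A i x y))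
    (hA2 : ∀ i (x : ℝ), Antitone (fun y => A i x y))
    (hsub : ∀ i ∈ Finset.Icc 1 I,
      usub i + A i (usub i) (usub (i + 1)) - A (i - 1) (usub (i - 1)) (usub i) ≤ f i)
    (hsuper : ∀ i ∈ Finset.Icc 1 I,
      usup i + A i (usup i) (usup (i + 1)) - A (i - 1) (usup (i - 1)) (usup i) ≥ f i) :
    ∀ i ∈ Finset.Icc 1 I, usub i ≤ usup i := by
  by_contra hcon
  push_neg at hcon
  obtain ⟨i0, hi0mem, hi0⟩ := hcon
  set P : ℕ → Prop := fun j => j ∈ Finset.Icc 1 I ∧ usup j < usub j with hP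
  have hPi0 : P i0 := ⟨hi0mem, hi0⟩
  have hi0I : 1 ≤ i0 ∧ i0 ≤ I := by simpa [Finset.mem_Icc] using hi0mem
  classical
  -- right end
  have hbex : ∃ k, ¬ P (i0 + k + 1) := by
    refine ⟨I, fun h => ?_⟩
    have := h.1
    simp [Finset.mem_Icc] at this
  set t := Nat.find hbex with ht
  set b := i0 + t with hbdef
  have hnPb1 : ¬ P (b + 1) := Nat.find_spec hbex
  have hPb : ∀ j, i0 ≤ j → j ≤ b → P j := by
    intro j h1 h2
    obtain ⟨s, rfl⟩ := Nat.exists_eq_add_of_le h1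
    match s with
    | 0 => exact hPi0
    | s + 1 =>
      have hs : s < t := by omega
      exact not_not.mp (Nat.find_min hbex hs)
  -- left end
  have haex : ∃ k, ¬ P (i0 - (k + 1)) := by
    refine ⟨i0, fun h => ?_⟩
    have h1 := h.1
    rw [Finset.mem_Icc] at h1
    omega
  set s0 := Nat.find haex with hs0
  have hs0le : s0 ≤ i0 - 1 := by
    refine Nat.find_le ?_
    intro h
    have := h.1
    simp [Finset.mem_Icc] at this
    omega
  set a := i0 - s0 with hadef
  have hnPa1 : ¬ P (a - 1) := by
    have : a - 1 = i0 - (s0 + 1) := by omega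
    rw [this]; exact Nat.find_spec haex
  have hPa : ∀ j, a ≤ j → j ≤ i0 → P j := by
    intro j h1 h2
    have hr : j = i0 - (i0 - j) := by omega
    set r := i0 - j with hrdef
    match hrr : r, hr with
    | 0, hr => rw [hr]; simpa using hPi0
    | r + 1, hr =>
      have hrs : r < s0 := by omega
      have := Nat.find_min haex hrs
      rw [hr]
      exact not_not.mp this
  have hPab : ∀ j ∈ Finset.Icc a b, P j := by
    intro j hj
    simp [Finset.mem_Icc] at hj
    rcases le_or_gt j i0 with h | h
    · exact hPa j hj.1 h
    · exact hPb j h.le hj.2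
  have hPa' : P a := hPa a le_rfl (by omega)
  have hPb' : P b := hPb b (by omega) le_rfl
  have haI : 1 ≤ a ∧ a ≤ I := by have := hPa'.1; simp [Finset.mem_Icc] at this; exact this
  have hbI : 1 ≤ b ∧ b ≤ I := by have := hPb'.1; simp [Finset.mem_Icc] at this; exact this
  have hab : a ≤ b := by omega
  -- telescoping identity for any u
  have tele : ∀ u : ℕ → ℝ, ∑ i ∈ Finset.Icc a b,
      (u i + A i (u i) (u (i+1)) - A (i-1) (u (i-1)) (u i))
      = (∑ i ∈ Finset.Icc a b, u i) + (A b (u b) (u (b+1)) - A (a-1) (u (a-1)) (u a)) := by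
    intro u
    have key : ∀ i ∈ Finset.Icc a b,
        u i + A i (u i) (u (i+1)) - A (i-1) (u (i-1)) (u i)
        = u i + ((fun j => A j (u j) (u (j+1))) i - (fun j => A j (u j) (u (j+1))) (i-1)) := by
      intro i hi
      simp only [Finset.mem_Icc] at hi
      have h1 : i - 1 + 1 = i := by omega
      simp only [h1]
      ring
    rw [Finset.sum_congr rfl key, Finset.sum_add_distrib, telescope_aux _ a b hab,
      show a - 1 + 1 = a by omega]
  -- sum inequalities
  have hsum1 : ∑ i ∈ Finset.Icc a b,
      (usub i + A i (usub i) (usub (i+1)) - A (i-1) (usub (i-1)) (usub i)) ≤ ∑ i ∈ Finset.Icc a b, f i := by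
    refine Finset.sum_le_sum fun i hi => hsub i (hPab i hi).1
  have hsum2 : ∑ i ∈ Finset.Icc a b, f i ≤ ∑ i ∈ Finset.Icc a b,
      (usup i + A i (usup i) (usup (i+1)) - A (i-1) (usup (i-1)) (usup i)) := by
    refine Finset.sum_le_sum fun i hi => hsuper i (hPab i hi).1
  -- boundary estimates
  have RB : A b (usup b) (usup (b+1)) ≤ A b (usub b) (usub (b+1)) := by
    rcases eq_or_lt_of_le hbI.2 with hbeq | hblt
    · rw [hbeq, hAI, hAI]
    · have hmem : b + 1 ∈ Finset.Icc 1 I := by simp [Finset.mem_Icc]; omega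
      have hle : usub (b+1) ≤ usup (b+1) := by
        by_contra h
        exact hnPb1 ⟨hmem, by linarith [lt_of_not_ge h]⟩
      calc A b (usup b) (usup (b+1)) ≤ A b (usub b) (usup (b+1)) := hA1 b _ hPb'.2.le
        _ ≤ A b (usub b) (usub (b+1)) := hA2 b _ hle
  have LB : A (a-1) (usub (a-1)) (usub a) ≤ A (a-1) (usup (a-1)) (usup a) := by
    rcases eq_or_lt_of_le haI.1 with haeq | halt
    · rw [show a - 1 = 0 by omega, hA0, hA0]
    · have hmem : a - 1 ∈ Finset.Icc 1 I := by simp [Finset.mem_Icc]; omega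
      have hle : usub (a-1) ≤ usup (a-1) := by
        by_contra h
        exact hnPa1 ⟨hmem, by linarith [lt_of_not_ge h]⟩
      calc A (a-1) (usub (a-1)) (usub a) ≤ A (a-1) (usup (a-1)) (usub a) := hA1 _ _ hle
        _ ≤ A (a-1) (usup (a-1)) (usup a) := hA2 _ _ hPa'.2.le
  have hpos : 0 < ∑ i ∈ Finset.Icc a b, (usub i - usup i) := by
    refine Finset.sum_pos (fun i hi => sub_pos.mpr (hPab i hi).2) ⟨a, by simp [Finset.mem_Icc]; omega⟩
  rw [tele usub] at hsum1
  rw [tele usup] at hsum2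
  rw [Finset.sum_sub_distrib] at hpos
  linarith

open Filter Topology



/-- existence for monotone schemes, between a subsolution and a
supersolution. -/
theorem monotone_scheme_existence
    (I : ℕ) (hI : 1 ≤ I)
    (A : ℕ → ℝ → ℝ → ℝ) (f : ℕ → ℝ)
    (hA0 : ∀ x y : ℝ, A 0 x y = 0) (hAI : ∀ x y : ℝ, A I x y = 0)
    (hALip : ∀ i, ∃ L : NNReal, LipschitzWith L (fun p : ℝ × ℝ => A i p.1 p.2))
    (hA1 : ∀ i (y : ℝ), Monotone (fun x => A i x y))
    (hA2 : ∀ i (x : ℝ), Antitone (fun y => A i x y))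
    (usub usup : ℕ → ℝ)
    (hsub : ∀ i ∈ Finset.Icc 1 I,
      usub i + A i (usub i) (usub (i + 1)) - A (i - 1) (usub (i - 1)) (usub i) ≤ f i)
    (hsuper : ∀ i ∈ Finset.Icc 1 I,
      usup i + A i (usup i) (usup (i + 1)) - A (i - 1) (usup (i - 1)) (usup i) ≥ f i) :
    ∃ u : ℕ → ℝ,
      (∀ i ∈ Finset.Icc 1 I,
        u i + A i (u i) (u (i + 1)) - A (i - 1) (u (i - 1)) (u i) = f i)
      ∧ (∀ i ∈ Finset.Icc 1 I, usub i ≤ u i ∧ u i ≤ usup i) := by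
  classical
  have hcomp : ∀ i ∈ Finset.Icc 1 I, usub i ≤ usup i :=
    scheme_comparison I A f usub usup hA0 hAI hA1 hA2 hsub hsuper
  choose L hL using hALip
  have lipfst : ∀ i (x x' y : ℝ), |A i x' y - A i x y| ≤ (L i : ℝ) * |x' - x| := by
    intro i x x' y
    have h := (hL i).dist_le_mul (x', y) (x, y)
    simp only [Prod.dist_eq, Real.dist_eq, sub_self, abs_zero] at h
    rwa [max_eq_left (abs_nonneg _)] at h
  have lipsnd : ∀ i (x y y' : ℝ), |A i x y' - A i x y| ≤ (L i : ℝ) * |y' - y| := by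
    intro i x y y'
    have h := (hL i).dist_le_mul (x, y') (x, y)
    simp only [Prod.dist_eq, Real.dist_eq, sub_self, abs_zero] at h
    rwa [max_eq_right (abs_nonneg _)] at h
  set K : ℝ := (((Finset.range (I+1)).sup L : NNReal) : ℝ) with hK
  have hK0 : (0:ℝ) ≤ K := NNReal.coe_nonneg _
  have hLleK : ∀ i, i ≤ I → (L i : ℝ) ≤ K := by
    intro i hi
    exact_mod_cast NNReal.coe_le_coe.mpr (Finset.le_sup (Finset.mem_range.mpr (by omega)))
  set τ : ℝ := 1 / (1 + 2*K) with hτdef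
  have hτpos : 0 < τ := by rw [hτdef]; positivity
  have hτbound : ∀ i, 1 ≤ i → i ≤ I → τ * (1 + (L i:ℝ) + (L (i-1):ℝ)) ≤ 1 := by
    intro i h1 h2
    have ha := hLleK i h2
    have hb := hLleK (i-1) (by omega)
    rw [hτdef, div_mul_eq_mul_div, div_le_one (by linarith)]
    linarith
  set G : (ℕ → ℝ) → (ℕ → ℝ) := fun u i => if i ∈ Finset.Icc 1 I then
      u i + τ * (f i - (u i + A i (u i) (u (i+1)) - A (i-1) (u (i-1)) (u i)))
    else usub i with hG
  have hGmono : ∀ u v : ℕ → ℝ, (∀ j, u j ≤ v j) → ∀ j, G u j ≤ G v j := by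
    intro u v huv j
    by_cases hj : j ∈ Finset.Icc 1 I
    · simp only [hG]
      rw [if_pos hj, if_pos hj]
      have hjI : 1 ≤ j ∧ j ≤ I := Finset.mem_Icc.mp hj
      have d0 : 0 ≤ v j - u j := by linarith [huv j]
      have fa : A j (u j) (v (j+1)) ≤ A j (u j) (u (j+1)) := hA2 j _ (huv (j+1))
      have fc : A j (v j) (v (j+1)) - A j (u j) (v (j+1)) ≤ (L j:ℝ) * (v j - u j) := by
        have h1 := lipfst j (u j) (v j) (v (j+1))
        rw [abs_of_nonneg d0] at h1
        exact le_trans (le_abs_self _) h1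
      have fd : A (j-1) (u (j-1)) (u j) ≤ A (j-1) (v (j-1)) (u j) := hA1 _ _ (huv (j-1))
      have ff : A (j-1) (v (j-1)) (u j) - A (j-1) (v (j-1)) (v j) ≤ (L (j-1):ℝ) * (v j - u j) := by
        have h1 := lipsnd (j-1) (v (j-1)) (v j) (u j)
        rw [abs_sub_comm (u j) (v j), abs_of_nonneg d0] at h1
        exact le_trans (le_abs_self _) h1
      have hτb := hτbound j hjI.1 hjI.2
      have t1 := mul_le_mul_of_nonneg_left fa hτpos.le
      have t2 := mul_le_mul_of_nonneg_left fc hτpos.le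
      have t3 := mul_le_mul_of_nonneg_left fd hτpos.le
      have t4 := mul_le_mul_of_nonneg_left ff hτpos.le
      have t5 : 0 ≤ (1 - τ * (1 + (L j:ℝ) + (L (j-1):ℝ))) * (v j - u j) :=
        mul_nonneg (by linarith) d0
      nlinarith [t1, t2, t3, t4, t5]
    · simp only [hG]
      rw [if_neg hj, if_neg hj]
  have hGsub : ∀ j, usub j ≤ G usub j := by
    intro j
    by_cases hj : j ∈ Finset.Icc 1 I
    · simp only [hG]
      rw [if_pos hj]
      have h := hsub j hj
      have h2 : 0 ≤ τ * (f j - (usub j + A j (usub j) (usub (j+1)) - A (j-1) (usub (j-1)) (usub j))) :=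
        mul_nonneg hτpos.le (by linarith)
      linarith
    · simp only [hG]
      rw [if_neg hj]
  set W : ℕ → ℝ := fun i => if i ∈ Finset.Icc 1 I then usup i else usub i with hW
  have hsubW : ∀ j, usub j ≤ W j := by
    intro j
    by_cases hj : j ∈ Finset.Icc 1 I
    · simp only [hW]; rw [if_pos hj]; exact hcomp j hj
    · simp only [hW]; rw [if_neg hj]
  have Sagree : ∀ (u v : ℕ → ℝ), (∀ k ∈ Finset.Icc 1 I, u k = v k) → ∀ j ∈ Finset.Icc 1 I,
      u j + A j (u j) (u (j+1)) - A (j-1) (u (j-1)) (u j)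
        = v j + A j (v j) (v (j+1)) - A (j-1) (v (j-1)) (v j) := by
    intro u v h j hj
    have hjI := Finset.mem_Icc.mp hj
    have ej : u j = v j := h j hj
    have eprev : A (j-1) (u (j-1)) (u j) = A (j-1) (v (j-1)) (v j) := by
      by_cases hj1 : j = 1
      · rw [hj1]; simp only [Nat.sub_self]; rw [hA0, hA0]
      · have hjm : j - 1 ∈ Finset.Icc 1 I := by rw [Finset.mem_Icc]; omega
        rw [h _ hjm, ej]
    have enext : A j (u j) (u (j+1)) = A j (v j) (v (j+1)) := by
      by_cases hjtop : j = I
      · rw [hjtop, hAI, hAI]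
      · have hjp : j + 1 ∈ Finset.Icc 1 I := by rw [Finset.mem_Icc]; omega
        rw [h _ hjp, ej]
    rw [eprev, enext, ej]
  have hWscheme : ∀ j ∈ Finset.Icc 1 I,
      f j ≤ W j + A j (W j) (W (j+1)) - A (j-1) (W (j-1)) (W j) := by
    intro j hj
    rw [Sagree W usup (fun k hk => by simp only [hW]; rw [if_pos hk]) j hj]
    exact hsuper j hj
  have hGW : ∀ j, G W j ≤ W j := by
    intro j
    by_cases hj : j ∈ Finset.Icc 1 I
    · simp only [hG]
      rw [if_pos hj]
      have h := hWscheme j hj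
      have h2 : τ * (f j - (W j + A j (W j) (W (j+1)) - A (j-1) (W (j-1)) (W j))) ≤ 0 :=
        mul_nonpos_of_nonneg_of_nonpos hτpos.le (by linarith)
      linarith
    · simp only [hG, hW]
      rw [if_neg hj, if_neg hj]
  set seq : ℕ → ℕ → ℝ := fun n => G^[n] usub with hseq
  have seq_zero : seq 0 = usub := rfl
  have seq_succ : ∀ n, seq (n+1) = G (seq n) := by
    intro n
    simp only [hseq]
    exact Function.iterate_succ_apply' G n usub
  have seq_le_W : ∀ n j, seq n j ≤ W j := by
    intro n
    induction n with
    | zero => intro j; rw [seq_zero]; exact hsubW j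
    | succ n ih => intro j; rw [seq_succ]; exact le_trans (hGmono _ _ ih j) (hGW j)
  have seq_mono : ∀ n j, seq n j ≤ seq (n+1) j := by
    intro n
    induction n with
    | zero => intro j; rw [seq_succ, seq_zero]; exact hGsub j
    | succ n ih =>
      intro j
      rw [seq_succ (n+1), seq_succ n]
      exact hGmono _ _ (fun k => by rw [← seq_succ n]; exact ih k) j
  have seq_mono' : ∀ j, Monotone (fun n => seq n j) :=
    fun j => monotone_nat_of_le_succ (fun n => seq_mono n j)
  have hbdd : ∀ j, BddAbove (Set.range fun n => seq n j) := by
    intro j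
    exact ⟨W j, by rintro x ⟨n, rfl⟩; exact seq_le_W n j⟩
  set U : ℕ → ℝ := fun j => ⨆ n, seq n j with hU
  have hconv : ∀ j, Tendsto (fun n => seq n j) atTop (𝓝 (U j)) :=
    fun j => tendsto_atTop_ciSup (seq_mono' j) (hbdd j)
  have hUsub : ∀ j, usub j ≤ U j := by
    intro j
    have := le_ciSup (hbdd j) 0
    simpa [seq_zero] using this
  have hUW : ∀ j, U j ≤ W j := fun j => ciSup_le (fun n => seq_le_W n j)
  refine ⟨U, ?_, ?_⟩
  · intro i hi
    have h1 : Tendsto (fun n => seq (n+1) i) atTop (𝓝 (U i)) :=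
      (hconv i).comp (tendsto_add_atTop_nat 1)
    have cA : ∀ k, Continuous (fun p : ℝ × ℝ => A k p.1 p.2) := fun k => (hL k).continuous
    have tA1 : Tendsto (fun n => A i (seq n i) (seq n (i+1))) atTop (𝓝 (A i (U i) (U (i+1)))) :=
      ((cA i).tendsto (U i, U (i+1))).comp ((hconv i).prodMk_nhds (hconv (i+1)))
    have tA2 : Tendsto (fun n => A (i-1) (seq n (i-1)) (seq n i)) atTop
        (𝓝 (A (i-1) (U (i-1)) (U i))) :=
      ((cA (i-1)).tendsto (U (i-1), U i)).comp ((hconv (i-1)).prodMk_nhds (hconv i))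
    have h2 : Tendsto (fun n => seq n i + τ * (f i - (seq n i + A i (seq n i) (seq n (i+1))
          - A (i-1) (seq n (i-1)) (seq n i)))) atTop
        (𝓝 (U i + τ * (f i - (U i + A i (U i) (U (i+1)) - A (i-1) (U (i-1)) (U i))))) :=
      (hconv i).add ((tendsto_const_nhds.sub (((hconv i).add tA1).sub tA2)).const_mul τ)
    have heq : (fun n => seq (n+1) i) = (fun n => seq n i + τ * (f i - (seq n i
        + A i (seq n i) (seq n (i+1)) - A (i-1) (seq n (i-1)) (seq n i)))) := by
      funext n
      rw [seq_succ]
      simp only [hG]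
      rw [if_pos hi]
    rw [heq] at h1
    have hfix := tendsto_nhds_unique h1 h2
    have hz : τ * (f i - (U i + A i (U i) (U (i+1)) - A (i-1) (U (i-1)) (U i))) = 0 := by
      linarith
    rcases mul_eq_zero.mp hz with h | h
    · exact absurd h (ne_of_gt hτpos)
    · linarith
  · intro i hi
    refine ⟨hUsub i, ?_⟩
    have := hUW i
    simp only [hW] at this
    rwa [if_pos hi] at this
end

section
/- Continuous energy dissipation for the Fokker-Planck equation: let T > 0, let J ⊆ ℝ be an open interval, let φ : J → ℝ be continuous with φ > 0 on J, let g : J → ℝ satisfy g'(s) = 1/φ(s) for all s ∈ J, let G be an antiderivative of g, and let v : [0,1] → ℝ be twice continuously differentiable. Suppose u : [0,1] × (0,T) → ℝ takes values in J, is continuously differentiable in t and twice continuously differentiable in x (with all these partials jointly continuous), solves ∂u/∂t = ∂/∂x ( ∂u/∂x − φ(u) ∂v/∂x ) on (0,1) × (0,T), and satisfies the no-flux boundary conditions ∂u/∂x (x,t) − φ(u(x,t)) v'(x) = 0 at x = 0 and x = 1 for all t ∈ (0,T). Then the energy 𝔈(t) = ∫₀¹ ( G(u(x,t)) − u(x,t)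 v(x) ) dx is differentiable on (0,T) with 𝔈'(t) = −∫₀¹ φ(u(x,t)) ( ∂/∂x [ g(u(x,t)) − v(x) ] )² dx, and in particular 𝔈'(t) ≤ 0 for all t ∈ (0,T). -/
/-!
Writing the flux as `ux − φ(u) v' = φ(u) ∂ₓ(g(u) − v)`, the equation reads
`∂ₜu = ∂ₓ(φ(u) ∂ₓ(g(u) − v))`. Differentiating under the integral sign gives
`𝔈' = ∫ (g(u) − v) ∂ₜu`, and one integration by parts, whose boundary terms vanish by the
no-flux condition, turns this into `−∫ φ(u) (∂ₓ(g(u) − v))²`.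
-/

open Set Filter Topology MeasureTheory intervalIntegral
open scoped Interval

theorem hasDerivAt_intervalIntegral_of_continuousOn_deriv
    {E : Type*} [NormedAddCommGroup E] [NormedSpace ℝ E]
    {a b t₀ : ℝ} {K : Set ℝ} {F F' : ℝ → ℝ → E}
    (hK : K ∈ 𝓝 t₀) (hKc : IsCompact K)
    (hF : ∀ s ∈ K, ContinuousOn (F s) [[a, b]])
    (hF' : ContinuousOn (fun p : ℝ × ℝ => F' p.2 p.1) ([[a, b]] ×ˢ K))
    (hdiff : ∀ s ∈ K, ∀ x ∈ [[a, b]], HasDerivAt (fun s => F s x) (F' s x) s) :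
    HasDerivAt (fun s => ∫ x in a..b, F s x) (∫ x in a..b, F' t₀ x) t₀ := by
  obtain ⟨M, hM⟩ := (isCompact_uIcc.prod hKc).exists_bound_of_continuousOn hF'
  have hF't₀ : ContinuousOn (F' t₀) [[a, b]] :=
    ContinuousOn.uncurry_right (f := fun x s => F' s x) t₀ (mem_of_mem_nhds hK) hF'
  refine (hasDerivAt_integral_of_dominated_loc_of_deriv_le (bound := fun _ => M) hK ?_
    ((hF t₀ (mem_of_mem_nhds hK)).intervalIntegrable)
    ((hF't₀.mono uIoc_subset_uIcc).aestronglyMeasurable measurableSet_uIoc)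
    (ae_of_all _ fun x hx s hs => hM (x, s) ⟨uIoc_subset_uIcc hx, hs⟩)
    intervalIntegrable_const
    (ae_of_all _ fun x hx s hs => hdiff s hs x (uIoc_subset_uIcc hx))).2
  filter_upwards [hK] with s hs
  exact ((hF s hs).mono uIoc_subset_uIcc).aestronglyMeasurable measurableSet_uIoc

theorem hasDerivAt_intervalIntegral_comp_sub_mul {a b t : ℝ} (hab : a ≤ b) {U J : Set ℝ}
    (hU : U ∈ 𝓝 t) {G g v : ℝ → ℝ} {u ut : ℝ → ℝ → ℝ}
    (hG : ∀ s ∈ J, HasDerivAt G (g s) s) (hgc : ContinuousOn g J)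
    (huJ : ∀ x ∈ Icc a b, ∀ s ∈ U, u x s ∈ J)
    (hut : ∀ x ∈ Icc a b, ∀ s ∈ U, HasDerivAt (fun s => u x s) (ut x s) s)
    (hu : ContinuousOn (fun p : ℝ × ℝ => u p.1 p.2) (Icc a b ×ˢ U))
    (hut_cont : ContinuousOn (fun p : ℝ × ℝ => ut p.1 p.2) (Icc a b ×ˢ U))
    (hv : ContinuousOn v (Icc a b)) :
    HasDerivAt (fun s => ∫ x in a..b, (G (u x s) - u x s * v x))
      (∫ x in a..b, (g (u x t) - v x) * ut x t) t := by
  obtain ⟨K, hK, hKU, hKc⟩ := local_compact_nhds hU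
  have hKU' : Icc a b ×ˢ K ⊆ Icc a b ×ˢ U := prod_mono subset_rfl hKU
  have hGc : ContinuousOn G J := fun s hs => (hG s hs).continuousAt.continuousWithinAt
  refine hasDerivAt_intervalIntegral_of_continuousOn_deriv
    (F := fun s x => G (u x s) - u x s * v x) (F' := fun s x => (g (u x s) - v x) * ut x s)
    hK hKc (fun s hs => ?_) ?_ (fun s hs x hx => ?_) <;> rw [uIcc_of_le hab] at *
  · have hus := ContinuousOn.uncurry_right (f := u) s (hKU hs) hu
    exact (hGc.comp hus fun x hx => huJ x hx s (hKU hs)).sub (hus.mul hv)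
  · exact ((hgc.comp (hu.mono hKU') fun p hp => huJ _ hp.1 _ (hKU hp.2)).sub
      (hv.comp continuous_fst.continuousOn fun p hp => hp.1)).mul (hut_cont.mono hKU')
  · have hut' := hut x hx s (hKU hs)
    exact ((hG _ (huJ x hx s (hKU hs))).comp s hut').sub (hut'.mul_const (v x))
      |>.congr_deriv (by ring)

theorem hasDerivAt_comp_sub_eq_div {g U V : ℝ → ℝ} {x c U' V' : ℝ}
    (hg : HasDerivAt g (1 / c) (U x)) (hc : c ≠ 0)
    (hU : HasDerivAt U U' x) (hV : HasDerivAt V V' x) :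
    HasDerivAt (fun y => g (U y) - V y) ((U' - c * V') / c) x :=
  ((hg.comp x hU).sub hV).congr_deriv (by field_simp)

theorem integral_mul_deriv_eq_neg_integral_mul_deriv_sq {a b : ℝ} (hab : a ≤ b)
    {p w w' ψ : ℝ → ℝ}
    (hp : ContinuousOn p (Icc a b)) (hw : ContinuousOn w (Icc a b))
    (hψ : ContinuousOn ψ (Icc a b)) (hψ0 : ∀ x ∈ Icc a b, ψ x ≠ 0)
    (hpw : ∀ x ∈ Ioo a b, HasDerivAt p (w x / ψ x) x)
    (hww' : ∀ x ∈ Ioo a b, HasDerivAt w (w' x) x) (hw' : IntervalIntegrable w' volume a b)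
    (ha : w a = 0) (hb : w b = 0) :
    ∫ x in a..b, p x * w' x = -∫ x in a..b, ψ x * deriv p x ^ 2 := by
  rw [← uIcc_of_le hab] at hp hw hψ hψ0
  have hIoo : Ioo (min a b) (max a b) = Ioo a b := by rw [min_eq_left hab, max_eq_right hab]
  rw [integral_mul_deriv_eq_deriv_mul_of_hasDerivAt (u' := fun x => w x / ψ x) hp hw
    (hIoo ▸ hpw) (hIoo ▸ hww') (hw.div hψ hψ0).intervalIntegrable hw', ha, hb,
    mul_zero, mul_zero, sub_zero, zero_sub, neg_inj]
  refine integral_congr_Ioo_of_le hab fun x hx => ?_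
  have hψx : ψ x ≠ 0 := hψ0 x (uIcc_of_le hab ▸ Ioo_subset_Icc_self hx)
  rw [(hpw x hx).deriv]
  field_simp

theorem continuous_energy_dissipation_fokker_planck_general
    (T : ℝ)
    (J : Set ℝ)
    (φ : ℝ → ℝ) (hφcont : ContinuousOn φ J) (hφpos : ∀ s ∈ J, 0 < φ s)
    (g G : ℝ → ℝ)
    (hg : ∀ s ∈ J, HasDerivAt g (1 / φ s) s)
    (hG : ∀ s ∈ J, HasDerivAt G (g s) s)
    (v vd vdd : ℝ → ℝ)
    (hv1 : ∀ x ∈ Set.Icc (0:ℝ) 1, HasDerivWithinAt v (vd x) (Set.Icc 0 1) x)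
    (hv2 : ∀ x ∈ Set.Icc (0:ℝ) 1, HasDerivWithinAt vd (vdd x) (Set.Icc 0 1) x)
    (u ut ux : ℝ → ℝ → ℝ)
    (huJ : ∀ x ∈ Set.Icc (0:ℝ) 1, ∀ t ∈ Set.Ioo 0 T, u x t ∈ J)
    (hut : ∀ x ∈ Set.Icc (0:ℝ) 1, ∀ t ∈ Set.Ioo 0 T,
      HasDerivAt (fun s => u x s) (ut x t) t)
    (hux : ∀ t ∈ Set.Ioo 0 T, ∀ x ∈ Set.Icc (0:ℝ) 1,
      HasDerivWithinAt (fun y => u y t) (ux x t) (Set.Icc 0 1) x)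
    (hcont_u : ContinuousOn (fun p : ℝ × ℝ => u p.1 p.2)
      (Set.Icc 0 1 ×ˢ Set.Ioo 0 T))
    (hcont_ut : ContinuousOn (fun p : ℝ × ℝ => ut p.1 p.2)
      (Set.Icc 0 1 ×ˢ Set.Ioo 0 T))
    (hcont_ux : ContinuousOn (fun p : ℝ × ℝ => ux p.1 p.2)
      (Set.Icc 0 1 ×ˢ Set.Ioo 0 T))
    (hpde : ∀ x ∈ Set.Ioo (0:ℝ) 1, ∀ t ∈ Set.Ioo 0 T,
      HasDerivAt (fun y => ux y t - φ (u y t) * vd y) (ut x t) x)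
    (hbc0 : ∀ t ∈ Set.Ioo 0 T, ux 0 t - φ (u 0 t) * vd 0 = 0)
    (hbc1 : ∀ t ∈ Set.Ioo 0 T, ux 1 t - φ (u 1 t) * vd 1 = 0) :
    ∀ t ∈ Set.Ioo 0 T,
      HasDerivAt (fun s => ∫ x in (0:ℝ)..1, (G (u x s) - u x s * v x))
        (-∫ x in (0:ℝ)..1, φ (u x t) * (deriv (fun y => g (u y t) - v y) x) ^ 2) t
      ∧ -∫ x in (0:ℝ)..1, φ (u x t) * (deriv (fun y => g (u y t) - v y) x) ^ 2 ≤ 0 := by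
  intro t ht
  have hφu0 : ∀ x ∈ Icc (0:ℝ) 1, φ (u x t) ≠ 0 := fun x hx => (hφpos _ (huJ x hx t ht)).ne'
  have huJt : MapsTo (fun x => u x t) (Icc 0 1) J := fun x hx => huJ x hx t ht
  have hgc : ContinuousOn g J := fun s hs => (hg s hs).continuousAt.continuousWithinAt
  have hvc : ContinuousOn v (Icc 0 1) := fun x hx => (hv1 x hx).continuousWithinAt
  have hu_slice := ContinuousOn.uncurry_right (f := u) t ht hcont_u
  have hpotential : ∀ x ∈ Ioo (0:ℝ) 1, HasDerivAt (fun y => g (u y t) - v y)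
      ((ux x t - φ (u x t) * vd x) / φ (u x t)) x := fun x hx =>
    have hx' := Ioo_subset_Icc_self hx
    hasDerivAt_comp_sub_eq_div (hg _ (huJt hx')) (hφu0 x hx')
      ((hux t ht x hx').hasDerivAt (Icc_mem_nhds hx.1 hx.2))
      ((hv1 x hx').hasDerivAt (Icc_mem_nhds hx.1 hx.2))
  have hdissipation := integral_mul_deriv_eq_neg_integral_mul_deriv_sq zero_le_one
    ((hgc.comp hu_slice huJt).sub hvc)
    ((ContinuousOn.uncurry_right (f := ux) t ht hcont_ux).sub
      ((hφcont.comp hu_slice huJt).mul fun x hx => (hv2 x hx).continuousWithinAt))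
    (hφcont.comp hu_slice huJt) hφu0 hpotential (fun x hx => hpde x hx t ht)
    ((ContinuousOn.uncurry_right (f := ut) t ht hcont_ut).intervalIntegrable_of_Icc zero_le_one)
    (hbc0 t ht) (hbc1 t ht)
  exact ⟨hdissipation ▸ hasDerivAt_intervalIntegral_comp_sub_mul zero_le_one
      (isOpen_Ioo.mem_nhds ht) hG hgc huJ hut hcont_u hcont_ut hvc,
    neg_nonpos.2 <| integral_nonneg zero_le_one fun x hx =>
      mul_nonneg (hφpos _ (huJt hx)).le (sq_nonneg _)⟩

/-- continuous energy dissipation for the Fokker-Planck equation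
(gradient-flow form, κ = 1): along a smooth solution of
`∂u/∂t = ∂/∂x (∂u/∂x − φ(u) ∂v/∂x)` with no-flux boundary conditions, the energy
`𝔈(t) = ∫₀¹ (G(u) − u v)` satisfies
`𝔈'(t) = −∫₀¹ φ(u) (∂/∂x [g(u) − v])² ≤ 0`. -/
theorem continuous_energy_dissipation_fokker_planck
    (T : ℝ) (hT : 0 < T)
    (J : Set ℝ) (hJopen : IsOpen J) (hJconn : J.OrdConnected)
    (φ : ℝ → ℝ) (hφcont : ContinuousOn φ J) (hφpos : ∀ s ∈ J, 0 < φ s)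
    (g G : ℝ → ℝ)
    (hg : ∀ s ∈ J, HasDerivAt g (1 / φ s) s)
    (hG : ∀ s ∈ J, HasDerivAt G (g s) s)
    (v vd vdd : ℝ → ℝ)
    (hv1 : ∀ x ∈ Set.Icc (0:ℝ) 1, HasDerivWithinAt v (vd x) (Set.Icc 0 1) x)
    (hv2 : ∀ x ∈ Set.Icc (0:ℝ) 1, HasDerivWithinAt vd (vdd x) (Set.Icc 0 1) x)
    (hvddcont : ContinuousOn vdd (Set.Icc 0 1))
    (u ut ux uxx : ℝ → ℝ → ℝ)
    (huJ : ∀ x ∈ Set.Icc (0:ℝ) 1, ∀ t ∈ Set.Ioo 0 T, u x t ∈ J)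
    (hut : ∀ x ∈ Set.Icc (0:ℝ) 1, ∀ t ∈ Set.Ioo 0 T,
      HasDerivAt (fun s => u x s) (ut x t) t)
    (hux : ∀ t ∈ Set.Ioo 0 T, ∀ x ∈ Set.Icc (0:ℝ) 1,
      HasDerivWithinAt (fun y => u y t) (ux x t) (Set.Icc 0 1) x)
    (huxx : ∀ t ∈ Set.Ioo 0 T, ∀ x ∈ Set.Icc (0:ℝ) 1,
      HasDerivWithinAt (fun y => ux y t) (uxx x t) (Set.Icc 0 1) x)
    (hcont_u : ContinuousOn (fun p : ℝ × ℝ => u p.1 p.2)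
      (Set.Icc 0 1 ×ˢ Set.Ioo 0 T))
    (hcont_ut : ContinuousOn (fun p : ℝ × ℝ => ut p.1 p.2)
      (Set.Icc 0 1 ×ˢ Set.Ioo 0 T))
    (hcont_ux : ContinuousOn (fun p : ℝ × ℝ => ux p.1 p.2)
      (Set.Icc 0 1 ×ˢ Set.Ioo 0 T))
    (hcont_uxx : ContinuousOn (fun p : ℝ × ℝ => uxx p.1 p.2)
      (Set.Icc 0 1 ×ˢ Set.Ioo 0 T))
    (hpde : ∀ x ∈ Set.Ioo (0:ℝ) 1, ∀ t ∈ Set.Ioo 0 T,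
      HasDerivAt (fun y => ux y t - φ (u y t) * vd y) (ut x t) x)
    (hbc0 : ∀ t ∈ Set.Ioo 0 T, ux 0 t - φ (u 0 t) * vd 0 = 0)
    (hbc1 : ∀ t ∈ Set.Ioo 0 T, ux 1 t - φ (u 1 t) * vd 1 = 0) :
    ∀ t ∈ Set.Ioo 0 T,
      HasDerivAt (fun s => ∫ x in (0:ℝ)..1, (G (u x s) - u x s * v x))
        (-∫ x in (0:ℝ)..1, φ (u x t) * (deriv (fun y => g (u y t) - v y) x) ^ 2) t
      ∧ -∫ x in (0:ℝ)..1, φ (u x t) * (deriv (fun y => g (u y t) - v y) x) ^ 2 ≤ 0 :=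
  continuous_energy_dissipation_fokker_planck_general T J φ hφcont hφpos g G hg hG v vd vdd hv1 hv2
    u ut ux huJ hut hux hcont_u hcont_ut hcont_ux hpde hbc0 hbc1
end
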